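/- arXiv:1406.1237 — 11 statements merged into one kernel-verified Lean document; each statement's English description precedes it below -/
import Mathlib

section
/- Let R be a ring, M a left R-module, E = End_R(M), and α ∈ E. Then the following are equivalent: (1) α is strongly J^#-clean in E; (2) there exists a direct sum decomposition M = P ⊕ Q of left R-modules such that P and Q are α-invariant, α restricted to P lies in J^#(End_R(P)), and (1_M − α) restricted to Q lies in J^#(End_R(Q)). -/
open Polynomial

universe u

/-- The Jacobson radical of a ring: the intersection of all maximal (left) ideals. -/
def jacobsonRadical (R : Type*) [Ring R] : Ideal R := Ideal.jacobson (⊥ : Ideal R)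

/-- `J^#(R) = {x ∈ R : x ^ n ∈ J(R) for some n ∈ ℕ}`. -/
def Jsharp (R : Type*) [Ring R] : Set R :=
  {x | ∃ n : ℕ, 0 < n ∧ x ^ n ∈ jacobsonRadical R}

/-- An element `a` is strongly `J^#`-clean if `a = e + u` with `e` idempotent,
`u ∈ J^#(R)` and `e * a = a * e`. -/
def IsStronglyJsharpClean {R : Type*} [Ring R] (a : R) : Prop :=
  ∃ e : R, IsIdempotentElem e ∧ a - e ∈ Jsharp R ∧ e * a = a * e

/-- A commutative ring is projective-free if every finitely generated projective
module is free. -/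
def IsProjectiveFree (R : Type u) [CommRing R] : Prop :=
  ∀ (M : Type u) [AddCommGroup M] [Module R M],
    Module.Finite R M → Module.Projective R M → Module.Free R M

/-- `𝕁_r`: monic polynomials congruent to `(t - r) ^ deg f` modulo `J^#(R)`. -/
def Jpoly {R : Type*} [CommRing R] (r : R) : Set R[X] :=
  {f | f.Monic ∧ ∀ i, (f - (X - C r) ^ f.natDegree).coeff i ∈ Jsharp R}

/-! An idempotent `e` commuting with `α` amounts to a decomposition `M = ker e ⊕ range e` into
`α`-invariant submodules, `e` being the projection onto `range e`; on `ker e` the map `α - e` acts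
as `α`, on `range e` as `-(1 - α)`. So everything reduces to: an endomorphism `u` preserving both
summands of `M = P ⊕ Q` lies in `J^#(End M)` iff its restrictions lie in `J^#(End P)` and
`J^#(End Q)`. For `J` itself this is the corner identity `J(pSp) = pJ(S)p` for the projection `p`
onto `P`, obtained from the criterion `x ∈ J ↔ ∀ y, IsUnit (1 + y * x)` and Jacobson's lemma
(`1 + ab` is a unit iff `1 + ba` is); it passes to `J^#` because restriction commutes with powers. -/

section
variable {S : Type*} [Ring S]

theorem isUnit_one_add_mul_swap {a b : S} (h : IsUnit (1 + a * b)) : IsUnit (1 + b * a) := by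
  refine ⟨⟨1 + b * a, 1 - b * ↑h.unit⁻¹ * a, ?_, ?_⟩, rfl⟩
  · calc (1 + b * a) * (1 - b * ↑h.unit⁻¹ * a)
        = 1 + b * a - b * ((1 + a * b) * ↑h.unit⁻¹) * a := by noncomm_ring
      _ = 1 := by rw [h.mul_val_inv]; noncomm_ring
  · calc (1 - b * ↑h.unit⁻¹ * a) * (1 + b * a)
        = 1 + b * a - b * (↑h.unit⁻¹ * (1 + a * b)) * a := by noncomm_ring
      _ = 1 := by rw [h.val_inv_mul]; noncomm_ring

theorem mem_jacobsonRadical_iff {x : S} :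
    x ∈ jacobsonRadical S ↔ ∀ y, IsUnit (1 + y * x) := by
  simp only [jacobsonRadical, Ideal.mem_jacobson_iff, Ideal.mem_bot, sub_eq_zero]
  refine ⟨fun h y => ?_, fun h y => ⟨↑(h y).unit⁻¹, ?_⟩⟩
  · obtain ⟨z, hz⟩ := h y
    obtain ⟨w, hw⟩ := h (-(z * y))
    have hz_left : z * (1 + y * x) = 1 := by rw [mul_one_add, ← mul_assoc, add_comm, hz]
    have hw_left : w * z = 1 := by
      rw [← hw]; linear_combination (norm := noncomm_ring) w * hz
    have hw_eq : w = 1 + y * x := left_inv_eq_right_inv hw_left hz_left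
    exact ⟨⟨1 + y * x, z, hw_eq ▸ hw_left, hz_left⟩, rfl⟩
  · simpa only [mul_add, mul_one, mul_assoc, add_comm] using (h y).val_inv_mul

instance : (jacobsonRadical S).IsTwoSided := inferInstanceAs (Ideal.jacobson ⊥).IsTwoSided

theorem pow_mem_jacobsonRadical_of_le {x : S} {m n : ℕ}
    (hx : x ^ m ∈ jacobsonRadical S) (hmn : m ≤ n) : x ^ n ∈ jacobsonRadical S :=
  pow_sub_mul_pow x hmn ▸ Ideal.mul_mem_left _ _ hx

theorem neg_mem_Jsharp_iff {x : S} : -x ∈ Jsharp S ↔ x ∈ Jsharp S := by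
  suffices ∀ y : S, y ∈ Jsharp S → -y ∈ Jsharp S from ⟨fun hx => neg_neg x ▸ this _ hx, this x⟩
  rintro y ⟨n, hn, hy⟩
  exact ⟨n, hn, (neg_pow y n).symm ▸ Ideal.mul_mem_left _ _ hy⟩

end

section
variable {R M : Type*} [Ring R] [AddCommGroup M] [Module R M] {P Q : Submodule R M}

theorem Module.End.isUnit_iff_isUnit_restrict (h : IsCompl P Q) {f : Module.End R M}
    (hP : ∀ x ∈ P, f x ∈ P) (hQ : ∀ x ∈ Q, f x ∈ Q) :
    IsUnit f ↔ IsUnit (f.restrict hP) ∧ IsUnit (f.restrict hQ) := by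
  have hconj : f ∘ P.prodEquivOfIsCompl Q h =
      P.prodEquivOfIsCompl Q h ∘ Prod.map (f.restrict hP) (f.restrict hQ) := by
    ext ⟨x, y⟩; simp
  simp only [Module.End.isUnit_iff, ← Prod.map_bijective, ← EquivLike.comp_bijective _
    (P.prodEquivOfIsCompl Q h), ← hconj, EquivLike.bijective_comp]

open Submodule in
theorem mul_projection_mem_jacobsonRadical_iff (h : IsCompl P Q) {u : Module.End R M}
    (hu : ∀ x ∈ P, u x ∈ P) :
    u * P.projection Q h ∈ jacobsonRadical (Module.End R M) ↔
      u.restrict hu ∈ jacobsonRadical (Module.End R P) := by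
  set p := P.projection Q h
  simp only [mem_jacobsonRadical_iff]
  constructor
  · intro H y
    set c : Module.End R M := P.subtype ∘ₗ y ∘ₗ P.projectionOnto Q h * (u * p)
    have hcP : ∀ x ∈ P, (1 + c) x ∈ P := fun x hx => P.add_mem hx (SetLike.coe_mem _)
    have hcQ : ∀ x ∈ Q, (1 + c) x ∈ Q := fun x hx => by
      simp [c, p, projection_apply_of_mem_right h hx, hx]
    have hres : (1 + c).restrict hcP = 1 + y * u.restrict hu := by
      ext x; simp [c, p, projection_apply_left, projectionOnto_apply_of_mem_left h (hu x x.2),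
        LinearMap.restrict_apply]
    exact hres ▸ ((Module.End.isUnit_iff_isUnit_restrict h hcP hcQ).1 (H _)).1
  · intro H y
    -- by Jacobson's lemma it suffices that `1 + p * (y * (u * p))`, which preserves `P` and `Q`,
    -- is a unit
    set d : Module.End R M := p * (y * (u * p))
    have hdP : ∀ x ∈ P, (1 + d) x ∈ P := fun x hx => P.add_mem hx (projection_apply_mem h _)
    have hdQ : ∀ x ∈ Q, (1 + d) x ∈ Q := fun x hx => by
      simp [d, p, projection_apply_of_mem_right h hx, hx]
    have hpy : ∀ x ∈ P, (p * y) x ∈ P := fun x _ => projection_apply_mem h _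
    have hd : IsUnit (1 + d) := by
      rw [Module.End.isUnit_iff_isUnit_restrict h hdP hdQ]
      constructor
      · have : (1 + d).restrict hdP = 1 + (p * y).restrict hpy * u.restrict hu := by
          ext x; simp [d, p, projection_apply_left]
        exact this ▸ H _
      · have : (1 + d).restrict hdQ = 1 := by
          ext x; simp [d, p]
        exact this ▸ isUnit_one
    have hp : p * p = p := (isIdempotentElem_projection h).eq
    simpa [d, mul_assoc, hp] using isUnit_one_add_mul_swap hd

theorem mem_jacobsonRadical_iff_restrict (h : IsCompl P Q) {u : Module.End R M}
    (hP : ∀ x ∈ P, u x ∈ P) (hQ : ∀ x ∈ Q, u x ∈ Q) :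
    u ∈ jacobsonRadical (Module.End R M) ↔
      u.restrict hP ∈ jacobsonRadical (Module.End R P) ∧
        u.restrict hQ ∈ jacobsonRadical (Module.End R Q) := by
  rw [← mul_projection_mem_jacobsonRadical_iff h, ← mul_projection_mem_jacobsonRadical_iff h.symm]
  refine ⟨fun hu => ⟨Ideal.mul_mem_right _ _ hu, Ideal.mul_mem_right _ _ hu⟩,
    fun ⟨huP, huQ⟩ => ?_⟩
  have hsplit : u = u * P.projection Q h + u * Q.projection P h.symm := by
    rw [← mul_add, Submodule.projection_add_projection_eq_id, ← Module.End.one_eq_id, mul_one]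
  exact hsplit ▸ Ideal.add_mem _ huP huQ
theorem mem_Jsharp_iff_restrict (h : IsCompl P Q) {u : Module.End R M}
    (hP : ∀ x ∈ P, u x ∈ P) (hQ : ∀ x ∈ Q, u x ∈ Q) :
    u ∈ Jsharp (Module.End R M) ↔
      u.restrict hP ∈ Jsharp (Module.End R P) ∧ u.restrict hQ ∈ Jsharp (Module.End R Q) := by
  have hPn (n : ℕ) := Module.End.pow_apply_mem_of_forall_mem n hP
  have hQn (n : ℕ) := Module.End.pow_apply_mem_of_forall_mem n hQ
  constructor
  · rintro ⟨n, hn, hu⟩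
    obtain ⟨huP, huQ⟩ := (mem_jacobsonRadical_iff_restrict h (hPn n) (hQn n)).1 hu
    exact ⟨⟨n, hn, by rwa [Module.End.pow_restrict]⟩, ⟨n, hn, by rwa [Module.End.pow_restrict]⟩⟩
  · rintro ⟨⟨n, hn, huP⟩, ⟨m, -, huQ⟩⟩
    refine ⟨n + m, by omega, (mem_jacobsonRadical_iff_restrict h (hPn _) (hQn _)).2 ⟨?_, ?_⟩⟩
    · rw [← Module.End.pow_restrict _ hP]
      exact pow_mem_jacobsonRadical_of_le huP (by omega)
    · rw [← Module.End.pow_restrict _ hQ]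
      exact pow_mem_jacobsonRadical_of_le huQ (by omega)

open Submodule in
theorem sub_projection_mem_Jsharp_iff (h : IsCompl P Q) {α : Module.End R M}
    (hP : ∀ x ∈ P, α x ∈ P) (hQα : ∀ x ∈ Q, α x ∈ Q) (hQ : ∀ x ∈ Q, (1 - α) x ∈ Q) :
    α - Q.projection P h.symm ∈ Jsharp (Module.End R M) ↔
      α.restrict hP ∈ Jsharp (Module.End R P) ∧ (1 - α).restrict hQ ∈ Jsharp (Module.End R Q) := by
  have hvP : ∀ x ∈ P, (α - Q.projection P h.symm) x ∈ P := fun x hx => by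
    simpa [projection_apply_of_mem_right h.symm hx] using hP x hx
  have hvQ : ∀ x ∈ Q, (α - Q.projection P h.symm) x ∈ Q := fun x hx => by
    simpa [projection_apply_of_mem_left h.symm hx] using Q.sub_mem (hQα x hx) hx
  have hresP : (α - Q.projection P h.symm).restrict hvP = α.restrict hP := by
    ext x; simp
  have hresQ : (α - Q.projection P h.symm).restrict hvQ = -(1 - α).restrict hQ := by
    ext x; simp
  rw [mem_Jsharp_iff_restrict h hvP hvQ, hresP, hresQ, neg_mem_Jsharp_iff]
end

/-- an endomorphism `α` of `M` is strongly `J^#`-clean iff `M = P ⊕ Q`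
with `P, Q` both `α`-invariant, `α|_P ∈ J^#(End(P))` and `(1 - α)|_Q ∈ J^#(End(Q))`. -/
theorem stronglyJsharpClean_end_iff {R M : Type*} [Ring R] [AddCommGroup M] [Module R M]
    (α : Module.End R M) :
    IsStronglyJsharpClean α ↔
      ∃ P Q : Submodule R M, IsCompl P Q ∧
        ∃ (hP : ∀ x ∈ P, α x ∈ P) (_ : ∀ x ∈ Q, α x ∈ Q)
          (hQ : ∀ x ∈ Q, (1 - α) x ∈ Q),
          (α.restrict hP ∈ Jsharp (Module.End R P)) ∧
          ((1 - α).restrict hQ ∈ Jsharp (Module.End R Q)) := by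
  constructor
  · rintro ⟨e, he, hJ, hcomm⟩
    obtain ⟨hQα, hPα⟩ := (LinearMap.IsIdempotentElem.commute_iff he).1 hcomm
    have hcompl := (LinearMap.IsIdempotentElem.isCompl he).symm
    have hQ : ∀ x ∈ LinearMap.range e, (1 - α) x ∈ LinearMap.range e := fun x hx =>
      Submodule.sub_mem _ hx (hQα hx)
    rw [LinearMap.IsIdempotentElem.eq_projection he] at hJ
    exact ⟨_, _, hcompl, hPα, hQα, hQ, (sub_projection_mem_Jsharp_iff hcompl hPα hQα hQ).1 hJ⟩
  · rintro ⟨P, Q, h, hP, hQα, hQ, hJ⟩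
    have he := Submodule.isIdempotentElem_projection h.symm
    refine ⟨_, he, (sub_projection_mem_Jsharp_iff h hP hQα hQ).2 hJ, ?_⟩
    refine ((LinearMap.IsIdempotentElem.commute_iff he).2 ⟨?_, ?_⟩).eq
    · rwa [Submodule.range_projection]
    · rwa [Submodule.ker_projection]
end

section
/- Let R be a commutative ring and let φ be an n × n matrix over R. Then the following are equivalent: (1) φ ∈ J^#(M_n(R)); (2) the characteristic polynomial χ(φ) = det(tI_n − φ) is congruent to t^n modulo J(R), i.e., χ(φ) − t^n has all coefficients in J(R); (3) there exists a monic polynomial h ∈ R[t] such that h ≡ t^{deg h} modulo J(R) (i.e., all coefficients of h other than the leading one lie in J(R)) and h(φ) = 0. -/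
open Polynomial

universe u

/-!
Since `J(Mₙ(R)) = Mₙ(J(R))`, the condition `φ ∈ J^#(Mₙ(R))` says that `φ` becomes nilpotent
over `R ⧸ J(R)`. That ring is reduced, so there the characteristic polynomial of the nilpotent
image of `φ` is exactly `tⁿ`; Cayley–Hamilton then supplies `h = χ(φ)`, and conversely
`h(φ) = 0` with `h ≡ t^d` forces `φ^d ≡ 0` entrywise modulo `J(R)`.
-/

theorem TwoSidedIdeal.asIdeal_bot (R : Type*) [Ring R] :
    TwoSidedIdeal.asIdeal (⊥ : TwoSidedIdeal R) = ⊥ := by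
  ext
  simp

theorem jacobsonRadical_matrix (R : Type*) [Ring R] (ι : Type*) [Fintype ι] [DecidableEq ι] :
    jacobsonRadical (Matrix ι ι R) = (jacobsonRadical R).matrix ι := by
  have h := congrArg TwoSidedIdeal.asIdeal (TwoSidedIdeal.matrix_jacobson_bot (R := R) (n := ι))
  rw [TwoSidedIdeal.asIdeal_matrix, TwoSidedIdeal.asIdeal_jacobson,
    TwoSidedIdeal.asIdeal_jacobson, TwoSidedIdeal.asIdeal_bot, TwoSidedIdeal.asIdeal_bot] at h
  exact h.symm

namespace Matrix

variable {R : Type*} [CommRing R] {ι : Type*} [Fintype ι] [DecidableEq ι]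
  {I : Ideal R} {φ : Matrix ι ι R}

theorem aeval_mem_matrix_of_coeff_mem {p : R[X]} (hp : ∀ k, p.coeff k ∈ I) :
    aeval φ p ∈ I.matrix ι := by
  intro i j
  rw [aeval_eq_sum_range]
  simp only [sum_apply, smul_apply, smul_eq_mul]
  exact Ideal.sum_mem _ fun k _ => I.mul_mem_right _ (hp k)

theorem pow_natDegree_mem_matrix_of_aeval_eq_zero {h : R[X]}
    (hh : ∀ k, (h - X ^ h.natDegree).coeff k ∈ I) (h0 : aeval φ h = 0) :
    φ ^ h.natDegree ∈ I.matrix ι := by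
  have hpow : φ ^ h.natDegree = -aeval φ (h - X ^ h.natDegree) := by
    rw [map_sub, h0, map_pow, aeval_X, zero_sub, neg_neg]
  rw [hpow]
  exact neg_mem (aeval_mem_matrix_of_coeff_mem hh)

theorem coeff_charpoly_sub_X_pow_mem_of_pow_mem (hI : I.IsRadical) {m : ℕ}
    (hφ : φ ^ m ∈ I.matrix ι) (k : ℕ) :
    (φ.charpoly - X ^ Fintype.card ι).coeff k ∈ I := by
  have : IsReduced (R ⧸ I) := (Ideal.isRadical_iff_quotient_reduced I).mp hI
  have hnil : IsNilpotent (φ.map (Ideal.Quotient.mk I)) := by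
    refine ⟨m, ?_⟩
    ext i j
    rw [← Matrix.map_pow, map_apply, zero_apply, Ideal.Quotient.eq_zero_iff_mem]
    exact hφ i j
  have hk := (Polynomial.isNilpotent_iff.mp
    (isNilpotent_charpoly_sub_pow_of_isNilpotent hnil) k).eq_zero
  rwa [charpoly_map, ← Polynomial.map_X (Ideal.Quotient.mk I), ← Polynomial.map_pow,
    ← Polynomial.map_sub, coeff_map, Ideal.Quotient.eq_zero_iff_mem] at hk

theorem coeff_charpoly_sub_X_pow_natDegree_mem
    (hc : ∀ k, (φ.charpoly - X ^ Fintype.card ι).coeff k ∈ I) (k : ℕ) :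
    (φ.charpoly - X ^ φ.charpoly.natDegree).coeff k ∈ I := by
  rcases subsingleton_or_nontrivial R with hR | hR
  · rw [Subsingleton.elim ((φ.charpoly - _).coeff k) 0]
    exact I.zero_mem
  · rw [charpoly_natDegree_eq_dim]
    exact hc k

end Matrix

/-- for a matrix `φ` over a commutative ring, `φ ∈ J^#(M_n(R))` iff
`χ(φ) ≡ t ^ n (mod J(R))` iff `φ` satisfies some monic `h` with `h ≡ t ^ deg h (mod J(R))`. -/
theorem mem_Jsharp_matrix_iff {R : Type*} [CommRing R] {n : ℕ}
    (φ : Matrix (Fin n) (Fin n) R) :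
    (φ ∈ Jsharp (Matrix (Fin n) (Fin n) R) ↔
      ∀ i, (φ.charpoly - X ^ n).coeff i ∈ jacobsonRadical R) ∧
    (φ ∈ Jsharp (Matrix (Fin n) (Fin n) R) ↔
      ∃ h : R[X], h.Monic ∧ (∀ i, (h - X ^ h.natDegree).coeff i ∈ jacobsonRadical R) ∧
        Polynomial.aeval φ h = 0) := by
  have hJsharp : φ ∈ Jsharp (Matrix (Fin n) (Fin n) R) ↔
      ∃ m, 0 < m ∧ φ ^ m ∈ (jacobsonRadical R).matrix (Fin n) := by
    rw [Jsharp, jacobsonRadical_matrix, Set.mem_ofPred_eq]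
  have h12 : φ ∈ Jsharp (Matrix (Fin n) (Fin n) R) →
      ∀ i, (φ.charpoly - X ^ n).coeff i ∈ jacobsonRadical R := by
    rw [hJsharp]
    rintro ⟨m, -, hm⟩ i
    have hi := φ.coeff_charpoly_sub_X_pow_mem_of_pow_mem (Ideal.isRadical_jacobson ⊥) hm i
    rwa [Fintype.card_fin] at hi
  have h23 : (∀ i, (φ.charpoly - X ^ n).coeff i ∈ jacobsonRadical R) →
      ∃ h : R[X], h.Monic ∧ (∀ i, (h - X ^ h.natDegree).coeff i ∈ jacobsonRadical R) ∧
        Polynomial.aeval φ h = 0 := fun hc =>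
    ⟨φ.charpoly, φ.charpoly_monic,
      φ.coeff_charpoly_sub_X_pow_natDegree_mem (by rwa [Fintype.card_fin]), φ.aeval_self_charpoly⟩
  have h31 : (∃ h : R[X], h.Monic ∧ (∀ i, (h - X ^ h.natDegree).coeff i ∈ jacobsonRadical R) ∧
      Polynomial.aeval φ h = 0) → φ ∈ Jsharp (Matrix (Fin n) (Fin n) R) := by
    rintro ⟨h, -, hh, h0⟩
    rw [hJsharp]
    refine ⟨h.natDegree + 1, h.natDegree.succ_pos, ?_⟩
    rw [pow_succ']
    exact Ideal.mul_mem_left _ φ (φ.pow_natDegree_mem_matrix_of_aeval_eq_zero hh h0)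
  exact ⟨⟨h12, h31 ∘ h23⟩, ⟨h23 ∘ h12, h31⟩⟩
end

section
/- Let R be a projective-free ring, let φ be an n × n matrix over R, and let h ∈ R[t] be a monic polynomial of degree n such that h(φ) = 0. If there exists a factorization h = h₀h₁ with h₀ ∈ 𝕁₀ and h₁ ∈ 𝕁₁, then φ is strongly J^#-clean in M_n(R). -/
open Polynomial

universe u

section Aux

variable {R : Type*} [CommRing R]

lemma mem_jsharp_iff {x : R} : x ∈ Jsharp R ↔ x ∈ (jacobsonRadical R).radical := by
  constructor
  · rintro ⟨m, _, hx⟩; exact ⟨m, hx⟩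
  · rintro ⟨m, hx⟩
    rcases Nat.eq_zero_or_pos m with rfl | hm
    · refine ⟨1, one_pos, ?_⟩
      rw [pow_zero] at hx
      simpa using (jacobsonRadical R).mul_mem_left x hx
    · exact ⟨m, hm, hx⟩

lemma isUnit_one_add_of_mem_jac {x : R} (hx : x ∈ jacobsonRadical R) : IsUnit (1 + x) := by
  have := Ideal.mem_jacobson_bot.mp hx 1
  simpa [add_comm] using this

lemma isUnit_one_add_of_mem_rad {x : R} (hx : x ∈ (jacobsonRadical R).radical) :
    IsUnit (1 + x) := by
  obtain ⟨m, hm⟩ := hx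
  have h1 : (1 + x) * (∑ i ∈ Finset.range m, (-x) ^ i) = 1 + (-((-x) ^ m)) := by
    have h := geom_sum_mul (-x) m
    linear_combination -h
  have hmem : -((-x) ^ m) ∈ jacobsonRadical R := by
    apply (jacobsonRadical R).neg_mem
    rw [neg_pow]
    exact Ideal.mul_mem_left _ _ hm
  have hu := isUnit_one_add_of_mem_jac hmem
  rw [← h1] at hu
  exact isUnit_of_mul_isUnit_left hu

lemma coeff_mul_mem (I : Ideal R) (p f : R[X]) (hf : ∀ k, f.coeff k ∈ I) (k : ℕ) :
    (p * f).coeff k ∈ I := by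
  rw [Polynomial.coeff_mul]
  exact Ideal.sum_mem _ fun x _ => Ideal.mul_mem_left _ _ (hf x.2)

variable {n : ℕ}

lemma aeval_entries_mem (φ : Matrix (Fin n) (Fin n) R) (I : Ideal R) (f : R[X])
    (hf : ∀ k, f.coeff k ∈ I) (i j : Fin n) : (Polynomial.aeval φ f) i j ∈ I := by
  rw [Polynomial.aeval_eq_sum_range, Matrix.sum_apply]
  apply Ideal.sum_mem
  intro k _
  rw [Matrix.smul_apply, smul_eq_mul]
  exact Ideal.mul_mem_right _ _ (hf k)

lemma mul_entries_mem_right (I : Ideal R) (A B : Matrix (Fin n) (Fin n) R)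
    (hB : ∀ i j, B i j ∈ I) (i j : Fin n) : (A * B) i j ∈ I := by
  rw [Matrix.mul_apply]
  exact Ideal.sum_mem _ fun k _ => Ideal.mul_mem_left _ _ (hB k j)

lemma matrix_isUnit_one_add_of_rad (A : Matrix (Fin n) (Fin n) R)
    (hA : ∀ i j, A i j ∈ (jacobsonRadical R).radical) : IsUnit (1 + A) := by
  rw [Matrix.isUnit_iff_isUnit_det]
  set I := (jacobsonRadical R).radical
  set f := Ideal.Quotient.mk I
  have hmap : (1 + A).map f = 1 := by
    ext i j
    by_cases hij : i = j
    · subst hij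
      have h0 : f (A i i) = 0 := Ideal.Quotient.eq_zero_iff_mem.mpr (hA i i)
      simp [Matrix.map_apply, Matrix.add_apply, Matrix.one_apply, h0]
    · have h0 : f (A i j) = 0 := Ideal.Quotient.eq_zero_iff_mem.mpr (hA i j)
      simp [Matrix.map_apply, Matrix.add_apply, Matrix.one_apply, hij, h0]
  have hdet : f ((1 + A).det) = 1 := by
    rw [RingHom.map_det, RingHom.mapMatrix_apply, hmap, Matrix.det_one]
  have hmem : (1 + A).det - 1 ∈ I := by
    rw [← Ideal.Quotient.eq_zero_iff_mem, map_sub, hdet, map_one, sub_self]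
  have := isUnit_one_add_of_mem_rad hmem
  simpa using this

lemma matrix_mem_jacobson (A : Matrix (Fin n) (Fin n) R)
    (hA : ∀ i j, A i j ∈ jacobsonRadical R) :
    A ∈ jacobsonRadical (Matrix (Fin n) (Fin n) R) := by
  rw [jacobsonRadical, Ideal.mem_jacobson_iff]
  intro Y
  have hYA : ∀ i j, (Y * A) i j ∈ (jacobsonRadical R).radical := by
    intro i j
    exact Ideal.le_radical (mul_entries_mem_right _ Y A hA i j)
  obtain ⟨u, hu⟩ := matrix_isUnit_one_add_of_rad (Y * A) hYA
  refine ⟨↑u⁻¹, ?_⟩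
  have : (↑u⁻¹ : Matrix (Fin n) (Fin n) R) * (1 + Y * A) = 1 := by
    rw [← hu, Units.inv_mul]
  rw [Ideal.mem_bot]
  calc (↑u⁻¹ : Matrix (Fin n) (Fin n) R) * Y * A + ↑u⁻¹ - 1
      = ↑u⁻¹ * (1 + Y * A) - 1 := by noncomm_ring
    _ = 0 := by rw [this, sub_self]

lemma matrix_jsharp_of_entries (A : Matrix (Fin n) (Fin n) R)
    (hA : ∀ i j, A i j ∈ (jacobsonRadical R).radical) :
    ∃ K : ℕ, 0 < K ∧ ∀ i j, (A ^ K) i j ∈ jacobsonRadical R := by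
  set T : Ideal R := Ideal.span (Set.range fun p : Fin n × Fin n => A p.1 p.2) with hT
  have hTfg : T.FG := Submodule.fg_span (Set.finite_range _)
  have hTle : T ≤ (jacobsonRadical R).radical := by
    rw [hT, Ideal.span_le]
    rintro x ⟨p, rfl⟩
    exact hA p.1 p.2
  obtain ⟨m, hm⟩ := Ideal.exists_pow_le_of_le_radical_of_fg hTle hTfg
  have hpow : ∀ k : ℕ, ∀ i j, (A ^ k) i j ∈ T ^ k := by
    intro k
    induction k with
    | zero => intro i j; simp [Ideal.one_eq_top]
    | succ k ih =>
      intro i j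
      rw [pow_succ, pow_succ, Matrix.mul_apply]
      apply Ideal.sum_mem
      intro l _
      exact Ideal.mul_mem_mul (ih i l) (Ideal.subset_span ⟨(l, j), rfl⟩)
  refine ⟨m + 1, Nat.succ_pos m, fun i j => ?_⟩
  have : T ^ (m + 1) ≤ jacobsonRadical R :=
    le_trans (Ideal.pow_le_pow_right (Nat.le_succ m)) hm
  exact this (hpow (m + 1) i j)

lemma pow_add_of_orth {T : Type*} [Ring T] {a b : T} (hab : a * b = 0) (hba : b * a = 0) :
    ∀ k : ℕ, (a + b) ^ (k + 1) = a ^ (k + 1) + b ^ (k + 1) := by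
  intro k
  induction k with
  | zero => simp
  | succ k ih =>
    have h1 : a ^ (k + 1) * b = 0 := by
      rw [pow_succ, mul_assoc, hab, mul_zero]
    have h2 : b ^ (k + 1) * a = 0 := by
      rw [pow_succ, mul_assoc, hba, mul_zero]
    rw [pow_succ, ih, add_mul, mul_add, mul_add, h1, h2, ← pow_succ, ← pow_succ]
    simp

end Aux

/-- over a projective-free ring, if a monic `h` of degree `n` kills `φ`
and factors as `h = h₀h₁` with `h₀ ∈ 𝕁₀`, `h₁ ∈ 𝕁₁`, then `φ` is strongly `J^#`-clean. -/
theorem isStronglyJsharpClean_of_factorization {R : Type u} [CommRing R]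
    (hR : IsProjectiveFree R) {n : ℕ} (φ : Matrix (Fin n) (Fin n) R)
    (h : R[X]) (hmonic : h.Monic) (hdeg : h.natDegree = n)
    (hkill : Polynomial.aeval φ h = 0)
    (hfac : ∃ h₀ h₁ : R[X], h = h₀ * h₁ ∧ h₀ ∈ Jpoly (0 : R) ∧ h₁ ∈ Jpoly (1 : R)) :
    IsStronglyJsharpClean φ := by
  classical
  obtain ⟨h₀, h₁, hprod, ⟨hm0, hc0⟩, ⟨hm1, hc1⟩⟩ := hfac
  set d₀ := h₀.natDegree with hd₀
  set d₁ := h₁.natDegree with hd₁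
  set J := jacobsonRadical R with hJ
  -- coefficients of the error terms lie in the radical of J
  have hc0' : ∀ k, (h₀ - X ^ d₀).coeff k ∈ J.radical := by
    intro k
    have := hc0 k
    rw [mem_jsharp_iff] at this
    simpa using this
  have hc1' : ∀ k, (h₁ - (X - 1) ^ d₁).coeff k ∈ J.radical := by
    intro k
    have := hc1 k
    rw [mem_jsharp_iff] at this
    simpa using this
  -- coprimality of X^d₀ and (X-1)^d₁
  have hcop : IsCoprime (X ^ d₀ : R[X]) ((X - 1) ^ d₁) :=
    IsCoprime.pow (⟨1, -1, by ring⟩ : IsCoprime (X : R[X]) (X - 1))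
  obtain ⟨p, q, hpq⟩ := hcop
  set c : R[X] := p * h₀ + q * h₁ - 1 with hc
  have hccoeff : ∀ k, c.coeff k ∈ J.radical := by
    intro k
    have hceq : c = p * (h₀ - X ^ d₀) + q * (h₁ - (X - 1) ^ d₁) := by
      rw [hc]; linear_combination hpq
    rw [hceq, Polynomial.coeff_add]
    exact Ideal.add_mem _ (coeff_mul_mem _ _ _ hc0' k) (coeff_mul_mem _ _ _ hc1' k)
  -- the matrix picture
  have key : ∀ f g : R[X], aeval φ f * aeval φ g = aeval φ g * aeval φ f := by
    intro f g
    rw [← map_mul, ← map_mul, mul_comm]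
  set Cm : Matrix (Fin n) (Fin n) R := aeval φ c with hCm
  have hCent : ∀ i j, Cm i j ∈ J.radical := fun i j => aeval_entries_mem φ _ c hccoeff i j
  have hone : (1 : Matrix (Fin n) (Fin n) R) + Cm = aeval φ (1 + c) := by rw [map_add, map_one]
  obtain ⟨u, hu⟩ := matrix_isUnit_one_add_of_rad Cm hCent
  set v : Matrix (Fin n) (Fin n) R := (↑u⁻¹ : Matrix (Fin n) (Fin n) R) with hv
  have hvu : v * (1 + Cm) = 1 := by rw [← hu, hv, Units.inv_mul]
  have huv : (1 + Cm) * v = 1 := by rw [← hu, hv, Units.mul_inv]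
  -- v commutes with every aeval φ f
  have hvf : ∀ f : R[X], Commute (aeval φ f) v := by
    intro f
    have h1 : Commute (aeval φ f) (↑u : Matrix (Fin n) (Fin n) R) := by
      rw [hu, hone]; exact key f (1 + c)
    exact h1.units_inv_right
  set e : Matrix (Fin n) (Fin n) R := v * aeval φ (p * h₀) with he
  -- 1 - e
  have h1me : (1 : Matrix (Fin n) (Fin n) R) - e = v * aeval φ (q * h₁) := by
    have h1 : (1 : Matrix (Fin n) (Fin n) R) = v * (1 + Cm) := hvu.symm
    rw [he, h1, ← mul_sub, hone, ← map_sub]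
    congr 1
    congr 1
    rw [hc]; ring
  -- e * (1 - e) = 0
  have hprod0 : aeval φ (p * h₀) * aeval φ (q * h₁) = 0 := by
    rw [← map_mul]
    have : p * h₀ * (q * h₁) = p * q * (h₀ * h₁) := by ring
    rw [this, ← hprod, map_mul, hkill, mul_zero]
  have he1me : e * (1 - e) = 0 := by
    rw [he, h1me]
    calc v * aeval φ (p * h₀) * (v * aeval φ (q * h₁))
        = v * (aeval φ (p * h₀) * v) * aeval φ (q * h₁) := by noncomm_ring
      _ = v * (v * aeval φ (p * h₀)) * aeval φ (q * h₁) := by rw [(hvf (p * h₀)).eq]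
      _ = v * v * (aeval φ (p * h₀) * aeval φ (q * h₁)) := by noncomm_ring
      _ = 0 := by rw [hprod0, mul_zero]
  have hee : IsIdempotentElem e := by
    have h2 : e - e * e = 0 := by
      have h3 : e * (1 - e) = e - e * e := by noncomm_ring
      rw [← h3]; exact he1me
    exact (sub_eq_zero.mp h2).symm
  -- commutation with φ
  have hφe : Commute φ e := by
    have h1 : Commute φ v := by
      have := hvf X; rwa [aeval_X] at this
    have h2 : Commute φ (aeval φ (p * h₀)) := by
      have := key X (p * h₀); rwa [aeval_X] at this
    exact h1.mul_right h2
  have heφ : e * φ = φ * e := hφe.eq.symm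
  -- orthogonal decomposition of φ - e
  set ψ : Matrix (Fin n) (Fin n) R := φ - e with hψdef
  set N := d₀ + d₁ + 1 with hN
  set a : Matrix (Fin n) (Fin n) R := (φ - 1) * e with ha
  set b : Matrix (Fin n) (Fin n) R := φ * (1 - e) with hb
  have hab0 : a * b = 0 := by
    calc a * b = (φ - 1) * (e * φ) * (1 - e) := by rw [ha, hb]; noncomm_ring
      _ = (φ - 1) * (φ * e) * (1 - e) := by rw [heφ]
      _ = (φ - 1) * φ * (e * (1 - e)) := by noncomm_ring
      _ = 0 := by rw [he1me, mul_zero]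
  have h1mee : (1 - e) * e = 0 := by
    have h3 : (1 - e) * e = e - e * e := by noncomm_ring
    rw [h3, hee, sub_self]
  have hc1e : Commute (1 - e) (φ - 1) :=
    Commute.sub_right (Commute.sub_left (Commute.one_left φ) hφe.symm) (Commute.one_right _)
  have hba0 : b * a = 0 := by
    calc b * a = φ * ((1 - e) * (φ - 1)) * e := by rw [ha, hb]; noncomm_ring
      _ = φ * ((φ - 1) * (1 - e)) * e := by rw [hc1e.eq]
      _ = φ * (φ - 1) * ((1 - e) * e) := by noncomm_ring
      _ = 0 := by rw [h1mee, mul_zero]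
  have hsum : a + b = ψ := by rw [ha, hb, hψdef]; noncomm_ring
  have hcom1 : Commute (φ - 1) e := Commute.sub_left hφe (Commute.one_left e)
  have hcom2 : Commute φ (1 - e) := Commute.sub_right (Commute.one_right φ) hφe
  have hψN : ψ ^ N = (φ - 1) ^ N * e + φ ^ N * (1 - e) := by
    have h2 := pow_add_of_orth hab0 hba0 (d₀ + d₁)
    have hae : a ^ N = (φ - 1) ^ N * e := by
      rw [ha, hcom1.mul_pow, hN, hee.pow_succ_eq (d₀ + d₁)]
    have hbe : b ^ N = φ ^ N * (1 - e) := by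
      rw [hb, hcom2.mul_pow, hN, (hee.one_sub).pow_succ_eq (d₀ + d₁)]
    rw [← hsum, hN, h2, ← hN, hae, hbe]
  -- entries of ψ ^ N lie in the radical of J
  have hXd₀h₁ : ∀ i j, (aeval φ (X ^ d₀ * h₁)) i j ∈ J.radical := by
    have hpoly : (X ^ d₀ * h₁ : R[X]) = h₀ * h₁ - (h₀ - X ^ d₀) * h₁ := by ring
    have hmat : aeval φ (X ^ d₀ * h₁) = -aeval φ ((h₀ - X ^ d₀) * h₁) := by
      rw [hpoly, map_sub, ← hprod, hkill, zero_sub]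
    intro i j
    rw [hmat, Matrix.neg_apply]
    apply neg_mem
    apply aeval_entries_mem
    intro k
    have h4 : ((h₀ - X ^ d₀) * h₁ : R[X]) = h₁ * (h₀ - X ^ d₀) := by ring
    rw [h4]
    exact coeff_mul_mem _ _ _ hc0' k
  have hX1d₁h₀ : ∀ i j, (aeval φ ((X - 1) ^ d₁ * h₀)) i j ∈ J.radical := by
    have hpoly : ((X - 1) ^ d₁ * h₀ : R[X]) = h₀ * h₁ - (h₁ - (X - 1) ^ d₁) * h₀ := by ring
    have hmat : aeval φ ((X - 1) ^ d₁ * h₀) = -aeval φ ((h₁ - (X - 1) ^ d₁) * h₀) := by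
      rw [hpoly, map_sub, ← hprod, hkill, zero_sub]
    intro i j
    rw [hmat, Matrix.neg_apply]
    apply neg_mem
    apply aeval_entries_mem
    intro k
    have h4 : ((h₁ - (X - 1) ^ d₁) * h₀ : R[X]) = h₀ * (h₁ - (X - 1) ^ d₁) := by ring
    rw [h4]
    exact coeff_mul_mem _ _ _ hc1' k
  have hterm2 : φ ^ N * (1 - e) = (v * aeval φ (X ^ (d₁ + 1) * q)) * aeval φ (X ^ d₀ * h₁) := by
    rw [h1me]
    have hφN : φ ^ N = aeval φ (X ^ N : R[X]) := by rw [map_pow, aeval_X]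
    have hcφv : Commute (φ ^ N) v := by rw [hφN]; exact hvf _
    calc φ ^ N * (v * aeval φ (q * h₁)) = (φ ^ N * v) * aeval φ (q * h₁) := by
          rw [mul_assoc]
      _ = (v * φ ^ N) * aeval φ (q * h₁) := by rw [hcφv.eq]
      _ = v * (aeval φ ((X : R[X]) ^ N) * aeval φ (q * h₁)) := by rw [hφN, mul_assoc]
      _ = v * aeval φ ((X ^ (d₁ + 1) * q) * (X ^ d₀ * h₁)) := by
          have hpoly2 : (X : R[X]) ^ N * (q * h₁) = (X ^ (d₁ + 1) * q) * (X ^ d₀ * h₁) := by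
            rw [hN]; ring
          rw [← map_mul, hpoly2]
      _ = (v * aeval φ (X ^ (d₁ + 1) * q)) * aeval φ (X ^ d₀ * h₁) := by
          rw [map_mul, mul_assoc]
  have hterm1 : (φ - 1) ^ N * e
      = (v * aeval φ ((X - 1) ^ (d₀ + 1) * p)) * aeval φ ((X - 1) ^ d₁ * h₀) := by
    rw [he]
    have hφ1N : (φ - 1) ^ N = aeval φ ((X - 1) ^ N : R[X]) := by
      rw [map_pow, map_sub, aeval_X, map_one]
    have hcφv : Commute ((φ - 1) ^ N) v := by rw [hφ1N]; exact hvf _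
    calc (φ - 1) ^ N * (v * aeval φ (p * h₀)) = ((φ - 1) ^ N * v) * aeval φ (p * h₀) := by
          rw [mul_assoc]
      _ = (v * (φ - 1) ^ N) * aeval φ (p * h₀) := by rw [hcφv.eq]
      _ = v * (aeval φ (((X : R[X]) - 1) ^ N) * aeval φ (p * h₀)) := by rw [hφ1N, mul_assoc]
      _ = v * aeval φ (((X - 1) ^ (d₀ + 1) * p) * ((X - 1) ^ d₁ * h₀)) := by
          have hpoly2 : ((X : R[X]) - 1) ^ N * (p * h₀) = ((X - 1) ^ (d₀ + 1) * p) * ((X - 1) ^ d₁ * h₀) := by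
            rw [hN]; ring
          rw [← map_mul, hpoly2]
      _ = (v * aeval φ ((X - 1) ^ (d₀ + 1) * p)) * aeval φ ((X - 1) ^ d₁ * h₀) := by
          rw [map_mul, mul_assoc]
  have hψNent : ∀ i j, (ψ ^ N) i j ∈ J.radical := by
    intro i j
    rw [hψN, Matrix.add_apply]
    refine Ideal.add_mem _ ?_ ?_
    · rw [hterm1]
      exact mul_entries_mem_right _ _ _ hX1d₁h₀ i j
    · rw [hterm2]
      exact mul_entries_mem_right _ _ _ hXd₀h₁ i j
  obtain ⟨K, hK, hKmem⟩ := matrix_jsharp_of_entries (ψ ^ N) hψNent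
  refine ⟨e, hee, ?_, heφ⟩
  refine ⟨N * K, Nat.mul_pos (by omega) hK, ?_⟩
  show (φ - e) ^ (N * K) ∈ jacobsonRadical (Matrix (Fin n) (Fin n) R)
  rw [← hψdef, pow_mul]
  exact matrix_mem_jacobson _ hKmem
end

section
/- Let R be a projective-free ring and let h ∈ R[t] be a monic polynomial of degree n. Then the following are equivalent: (1) every n × n matrix φ over R with characteristic polynomial χ(φ) = h is strongly J^#-clean; (2) the companion matrix C_h of h is strongly J^#-clean; (3) there exists a factorization h = h₀h₁ with h₀ ∈ 𝕁₀ and h₁ ∈ 𝕁₁. -/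
open Polynomial

universe u

/-- The companion matrix of a polynomial `h`: subdiagonal entries `1`, last column
`(-h₀, -h₁, …, -h_{n-1})ᵀ`, all other entries `0`. -/
def companionMatrix {R : Type*} [CommRing R] (n : ℕ) (h : R[X]) :
    Matrix (Fin n) (Fin n) R :=
  Matrix.of fun i j =>
    if (j : ℕ) = n - 1 then -h.coeff i
    else if (i : ℕ) = (j : ℕ) + 1 then 1 else 0


/-!
For commutative `R` one has `J^#(R) = J`, the ring `R/J` is reduced, and a matrix lies in
`J^#(Mₙ(R))` iff it is nilpotent modulo `J`. So `f ∈ 𝕁_r` means `f̄ = (t - r̄)^{deg f}` over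
`R/J`, and `χ(M) ∈ 𝕁_r` whenever `M - r` is nilpotent modulo `J`.

(3 ⇒ 1) Pick `a t^{d₀} + b (t - 1)^{d₁} = 1`. If `χ(φ) = h₀h₁`, the polynomials `u₀ = (a h₀)(φ)`
and `u₁ = (b h₁)(φ)` in `φ` satisfy `u₀u₁ = 0` by Cayley–Hamilton, and `u₀ + u₁ ≡ 1 (mod J)` is
a unit `u`. Hence `e = u⁻¹u₀` is an idempotent commuting with `φ`; modulo `J` it equals
`ā t^{d₀}` evaluated at `φ̄`, and `t^{d₀}(t - 1)^{d₁} = χ(φ̄)` divides `(t - ā t^{d₀})^{d₀+d₁}`.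

(2 ⇒ 3) An idempotent `e` commuting with `φ` splits `Rⁿ = ker e ⊕ im e` into `φ`-stable
finitely generated projective, hence free, summands. In an adapted basis `φ` and `e` become
`diag(M₀, M₁)` and `diag(0, 1)`, so `M₀` and `M₁ - 1` are nilpotent modulo `J` and
`χ(φ) = χ(M₀) χ(M₁)`.

(1 ⇔ 2) `C_h` is the matrix of multiplication by `t` on the free module `R[t]/(h)`, so
`χ(C_h) = h`.
-/

section JacobsonQuotient

variable {R : Type*} [CommRing R]

theorem jsharp_eq_jacobsonRadical : Jsharp R = jacobsonRadical R := by
  ext x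
  refine ⟨fun ⟨k, _, hk⟩ => (Ideal.isRadical_jacobson ⊥) ⟨k, hk⟩, fun hx => ⟨1, one_pos, ?_⟩⟩
  rwa [pow_one]

instance : IsReduced (R ⧸ jacobsonRadical R) :=
  (Ideal.isRadical_iff_quotient_reduced _).1 (Ideal.isRadical_jacobson ⊥)

theorem mem_jpoly_iff {r : R} {f : R[X]} :
    f ∈ Jpoly r ↔ f.Monic ∧ f.map (Ideal.Quotient.mk (jacobsonRadical R)) =
      (X - C (Ideal.Quotient.mk (jacobsonRadical R) r)) ^ f.natDegree := by
  simp only [Jpoly, Set.mem_ofPred_eq, jsharp_eq_jacobsonRadical, SetLike.mem_coe,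
    ← Ideal.Quotient.eq_zero_iff_mem, ← coeff_map]
  rw [← sub_eq_zero, Polynomial.ext_iff]
  simp

theorem mem_jpoly_of_map_eq {r : R} {f : R[X]} (hf : f.Monic) {d : ℕ}
    (hd : f.map (Ideal.Quotient.mk (jacobsonRadical R)) =
      (X - C (Ideal.Quotient.mk (jacobsonRadical R) r)) ^ d) : f ∈ Jpoly r := by
  refine mem_jpoly_iff.2 ⟨hf, ?_⟩
  rcases subsingleton_or_nontrivial (R ⧸ jacobsonRadical R) with _ | _
  · exact Subsingleton.elim _ _
  · have := congrArg natDegree hd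
    rw [hf.natDegree_map, (monic_X_sub_C _).natDegree_pow, natDegree_X_sub_C, mul_one] at this
    rwa [this]

end JacobsonQuotient

section MatrixJacobson

theorem mem_jacobsonRadical_matrix_iff {R : Type*} [Ring R] {ι : Type*} [Fintype ι]
    [DecidableEq ι] {A : Matrix ι ι R} :
    A ∈ jacobsonRadical (Matrix ι ι R) ↔ ∀ i j, A i j ∈ jacobsonRadical R := by
  have h := congrArg TwoSidedIdeal.asIdeal
    (TwoSidedIdeal.jacobson_matrix (n := ι) (⊥ : TwoSidedIdeal R))
  rw [TwoSidedIdeal.asIdeal_jacobson, TwoSidedIdeal.asIdeal_matrix, TwoSidedIdeal.asIdeal_matrix,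
    TwoSidedIdeal.asIdeal_jacobson] at h
  simp only [TwoSidedIdeal.bot_asIdeal, Ideal.matrix_bot] at h
  rw [jacobsonRadical, h, Ideal.mem_matrix]
  rfl

theorem map_mem_jsharp {S T : Type*} [Ring S] [Ring T] (f : S ≃+* T) {x : S}
    (hx : x ∈ Jsharp S) : f x ∈ Jsharp T := by
  obtain ⟨k, hk, hxk⟩ := hx
  refine ⟨k, hk, ?_⟩
  have := Ideal.mem_map_of_mem (f : S →+* T) hxk
  rwa [jacobsonRadical, Ideal.map_jacobson_of_bijective f.bijective, Ideal.map_bot,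
    RingHom.coe_coe, map_pow] at this

variable {R : Type*} [CommRing R] {ι : Type*} [Fintype ι] [DecidableEq ι]

theorem mem_jsharp_matrix_iff {A : Matrix ι ι R} :
    A ∈ Jsharp (Matrix ι ι R) ↔ IsNilpotent (A.map (Ideal.Quotient.mk (jacobsonRadical R))) := by
  have key : ∀ k : ℕ, A ^ k ∈ jacobsonRadical (Matrix ι ι R) ↔
      (A.map (Ideal.Quotient.mk (jacobsonRadical R))) ^ k = 0 := by
    intro k
    rw [mem_jacobsonRadical_matrix_iff, ← RingHom.mapMatrix_apply, ← map_pow, ← Matrix.ext_iff]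
    simp [Ideal.Quotient.eq_zero_iff_mem]
  constructor
  · rintro ⟨k, -, hk⟩
    exact ⟨k, (key k).1 hk⟩
  · rintro ⟨k, hk⟩
    exact ⟨k + 1, k.succ_pos, (key _).2 (by rw [pow_succ, hk, zero_mul])⟩

theorem fromBlocks_mem_jsharp {ι' : Type*} [Fintype ι'] [DecidableEq ι'] {A : Matrix ι ι R}
    {D : Matrix ι' ι' R} (h : Matrix.fromBlocks A 0 0 D ∈ Jsharp (Matrix (ι ⊕ ι') (ι ⊕ ι') R)) :
    A ∈ Jsharp (Matrix ι ι R) ∧ D ∈ Jsharp (Matrix ι' ι' R) := by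
  simp only [mem_jsharp_matrix_iff, Matrix.fromBlocks_map, Matrix.map_zero _ (map_zero _)] at h ⊢
  obtain ⟨k, hk⟩ := h
  rw [Matrix.fromBlocks_diagonal_pow, ← Matrix.fromBlocks_zero, Matrix.fromBlocks_inj] at hk
  exact ⟨⟨k, hk.1⟩, ⟨k, hk.2.2.2⟩⟩

theorem Matrix.charpoly_mem_jpoly {M : Matrix ι ι R} {r : R}
    (hM : M - Matrix.scalar ι r ∈ Jsharp (Matrix ι ι R)) : M.charpoly ∈ Jpoly r := by
  set π := Ideal.Quotient.mk (jacobsonRadical R)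
  have hnil := Matrix.isNilpotent_charpoly_sub_pow_of_isNilpotent (mem_jsharp_matrix_iff.1 hM)
  have hN : ((M - Matrix.scalar ι r).map π).charpoly = X ^ Fintype.card ι := by
    rw [← sub_eq_zero]
    exact Polynomial.ext fun i => (Polynomial.isNilpotent_iff.1 hnil i).eq_zero
  have hmap : (M - Matrix.scalar ι r).map π = M.map π - Matrix.scalar ι (π r) := by
    ext i j
    simp [Matrix.scalar_apply, Matrix.diagonal_apply, apply_ite π]
  rw [hmap, Matrix.charpoly_sub_scalar] at hN
  refine mem_jpoly_of_map_eq (Matrix.charpoly_monic M) (d := Fintype.card ι) ?_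
  calc M.charpoly.map π = ((M.map π).charpoly.comp (X + C (π r))).comp (X - C (π r)) := by
        simp [comp_assoc, Matrix.charpoly_map]
    _ = (X - C (π r)) ^ Fintype.card ι := by rw [hN]; simp

end MatrixJacobson

section Companion

variable {R : Type*} [CommRing R]

theorem AdjoinRoot.minpoly_root_of_monic {h : R[X]} (hm : h.Monic) :
    minpoly R (AdjoinRoot.root h) = h := by
  nontriviality R
  refine (minpoly.unique' R _ hm (by rw [AdjoinRoot.aeval_eq, AdjoinRoot.mk_self])
    fun q hq => ?_).symm
  refine or_iff_not_imp_right.2 fun hq0 => by_contra fun hne => ?_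
  have := (AdjoinRoot.powerBasis' hm).dim_le_degree_of_root hne (not_not.1 hq0)
  rw [AdjoinRoot.powerBasis'_dim, ← degree_eq_natDegree hm.ne_zero] at this
  exact this.not_gt hq

theorem Polynomial.X_pow_modByMonic {h : R[X]} (hm : h.Monic) {k : ℕ} (hk : k ≤ h.natDegree) :
    X ^ k %ₘ h = if k = h.natDegree then X ^ k - h else X ^ k := by
  nontriviality R
  have hdeg : degree (X ^ h.natDegree : R[X]) = degree h := by
    rw [degree_X_pow, degree_eq_natDegree hm.ne_zero]
  split_ifs with hkd
  · subst hkd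
    refine (div_modByMonic_unique 1 _ hm ⟨by ring, ?_⟩).2
    rw [← hdeg]
    exact degree_sub_lt_left hdeg (monic_X_pow _).ne_zero
      (by rw [leadingCoeff_X_pow, hm.leadingCoeff])
  · exact (modByMonic_eq_self_iff hm).2 (by
      rw [← hdeg, degree_X_pow, degree_X_pow]; exact_mod_cast lt_of_le_of_ne hk hkd)

theorem companionMatrix_eq_leftMulMatrix {h : R[X]} (hm : h.Monic) :
    companionMatrix h.natDegree h =
      Algebra.leftMulMatrix (AdjoinRoot.powerBasisAux' hm) (AdjoinRoot.root h) := by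
  ext i j
  have hj : (AdjoinRoot.powerBasisAux' hm) j = AdjoinRoot.root h ^ (j : ℕ) :=
    (AdjoinRoot.powerBasis' hm).basis_eq_pow j
  rw [Algebra.leftMulMatrix_eq_repr_mul, hj, ← pow_succ', ← AdjoinRoot.mk_X, ← map_pow,
    AdjoinRoot.powerBasisAux'_repr_apply_to_fun, AdjoinRoot.modByMonicHom_mk,
    X_pow_modByMonic hm (by omega)]
  simp only [companionMatrix, Matrix.of_apply]
  have hi := i.is_lt
  by_cases hjd : (j : ℕ) + 1 = h.natDegree
  · rw [if_pos (by omega), if_pos hjd, coeff_sub, coeff_X_pow, if_neg (by omega), zero_sub]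
  · rw [if_neg (by omega), if_neg hjd, coeff_X_pow]

theorem charpoly_companionMatrix {h : R[X]} (hm : h.Monic) :
    (companionMatrix h.natDegree h).charpoly = h := by
  rw [companionMatrix_eq_leftMulMatrix hm]
  exact (charpoly_leftMulMatrix (AdjoinRoot.powerBasis' hm)).trans (AdjoinRoot.minpoly_root_of_monic hm)

end Companion

section IdempotentFromCoprimeFactors

theorem IsIdempotentElem.units_inv_mul {S : Type*} [Ring S] {x y : S} (u : Sˣ)
    (hu : (u : S) = x + y) (hxy : x * y = 0) (hc : Commute x y) :
    IsIdempotentElem (↑u⁻¹ * x) := by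
  have hxv : x * ↑u⁻¹ = ↑u⁻¹ * x := (hu ▸ (Commute.refl x).add_right hc).units_inv_right.eq
  have hxx : x * x = x * u := by rw [hu, mul_add, hxy, add_zero]
  calc ↑u⁻¹ * x * (↑u⁻¹ * x) = ↑u⁻¹ * (x * ↑u⁻¹) * x := by simp only [mul_assoc]
    _ = ↑u⁻¹ * ↑u⁻¹ * (x * x) := by rw [hxv]; simp only [mul_assoc]
    _ = ↑u⁻¹ * (↑u⁻¹ * x) * u := by rw [hxx]; simp only [mul_assoc]
    _ = ↑u⁻¹ * x := by simp [mul_assoc, ← hxv]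

variable {S : Type*} [CommRing S]

theorem pow_dvd_add_mul_pow_pow (x c : S) (k : ℕ) : x ^ k ∣ (x + c * x ^ k) ^ k := by
  rcases k with _ | k
  · simp
  · exact pow_dvd_pow_of_dvd
      (dvd_add dvd_rfl (dvd_mul_of_dvd_right (dvd_pow_self x k.succ_ne_zero) c)) _

theorem X_pow_mul_X_sub_one_pow_dvd {a b : S[X]} {m k : ℕ}
    (hab : a * X ^ m + b * (X - 1) ^ k = 1) :
    X ^ m * (X - 1) ^ k ∣ (X - a * X ^ m) ^ (m + k) := by
  have h₀ : X - a * X ^ m = X + -a * X ^ m := by ring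
  have h₁ : X - a * X ^ m = (X - 1) + b * (X - 1) ^ k := by linear_combination -hab
  refine IsCoprime.mul_dvd ⟨a, b, hab⟩ ?_ ?_
  · exact (h₀ ▸ pow_dvd_add_mul_pow_pow _ _ m).trans (pow_dvd_pow _ (m.le_add_right k))
  · exact (h₁ ▸ pow_dvd_add_mul_pow_pow _ _ k).trans (pow_dvd_pow _ (k.le_add_left m))

variable {R : Type*} [CommRing R] {ι : Type*} [Fintype ι] [DecidableEq ι]

theorem Matrix.map_aeval (f : R →+* S) (φ : Matrix ι ι R) (p : R[X]) :
    (aeval φ p).map f = aeval (φ.map f) (p.map f) := by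
  rw [aeval_def, aeval_def, eval₂_map, ← RingHom.mapMatrix_apply, hom_eval₂]
  congr 1
  ext r : 1
  simp [Matrix.algebraMap_eq_diagonal]

theorem isNilpotent_sub_aeval_of_charpoly_eq {ψ : Matrix ι ι S} {a b : S[X]} {m k : ℕ}
    (hψ : ψ.charpoly = X ^ m * (X - 1) ^ k) (hab : a * X ^ m + b * (X - 1) ^ k = 1) :
    IsNilpotent (ψ - aeval ψ (a * X ^ m)) := by
  obtain ⟨q, hq⟩ := X_pow_mul_X_sub_one_pow_dvd hab
  refine ⟨m + k, ?_⟩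
  have := congrArg (aeval ψ) hq
  rwa [← hψ, map_mul, Matrix.aeval_self_charpoly, zero_mul, map_pow, map_sub, aeval_X] at this

theorem Matrix.isUnit_of_map_jacobsonRadical_eq_one {U : Matrix ι ι R}
    (hU : U.map (Ideal.Quotient.mk (jacobsonRadical R)) = 1) : IsUnit U := by
  have hdet : U.det - 1 ∈ jacobsonRadical R := by
    rw [← Ideal.Quotient.eq_zero_iff_mem, map_sub, map_one, RingHom.map_det,
      RingHom.mapMatrix_apply, hU, Matrix.det_one, sub_self]
  exact (Matrix.isUnit_iff_isUnit_det U).2 (Ideal.isUnit_of_sub_one_mem_jacobson_bot _ hdet)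

theorem isStronglyJsharpClean_of_charpoly_eq_mul {φ : Matrix ι ι R} {h₀ h₁ : R[X]}
    (hφ : φ.charpoly = h₀ * h₁) (h0 : h₀ ∈ Jpoly (0 : R)) (h1 : h₁ ∈ Jpoly (1 : R)) :
    IsStronglyJsharpClean φ := by
  set π := Ideal.Quotient.mk (jacobsonRadical R)
  obtain ⟨a, b, hab⟩ : IsCoprime ((X : R[X]) ^ h₀.natDegree) ((X - 1) ^ h₁.natDegree) :=
    IsCoprime.pow (⟨1, -1, by ring⟩ : IsCoprime (X : R[X]) (X - 1))
  have hmap0 : h₀.map π = X ^ h₀.natDegree := by simpa using (mem_jpoly_iff.1 h0).2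
  have hmap1 : h₁.map π = (X - 1) ^ h₁.natDegree := by simpa using (mem_jpoly_iff.1 h1).2
  have habπ : a.map π * X ^ h₀.natDegree + b.map π * (X - 1) ^ h₁.natDegree = 1 := by
    simpa using congrArg (map π) hab
  set u₀ := aeval φ (a * h₀)
  set u₁ := aeval φ (b * h₁)
  have hU : (u₀ + u₁).map π = 1 := by
    rw [← map_add, Matrix.map_aeval, Polynomial.map_add, Polynomial.map_mul, Polynomial.map_mul,
      hmap0, hmap1, habπ, aeval_one]
  obtain ⟨u, hu⟩ := Matrix.isUnit_of_map_jacobsonRadical_eq_one hU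
  have hinv : (↑u⁻¹ : Matrix ι ι R).map π = 1 := by
    simpa [Matrix.map_mul, hu, hU] using congrArg (Matrix.map · π) u.inv_mul
  have hcomm : ∀ p : R[X], Commute (aeval φ p) φ := fun p => by
    simpa using (Commute.all p X).map (aeval φ)
  refine ⟨(↑u⁻¹ : Matrix ι ι R) * u₀, IsIdempotentElem.units_inv_mul u hu ?_
    ((Commute.all _ _).map (aeval φ)), ?_, ?_⟩
  · rw [← map_mul, show a * h₀ * (b * h₁) = a * b * φ.charpoly by rw [hφ]; ring, map_mul,
      Matrix.aeval_self_charpoly, mul_zero]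
  · rw [mem_jsharp_matrix_iff]
    convert isNilpotent_sub_aeval_of_charpoly_eq (ψ := φ.map π) ?_ habπ using 1
    · rw [Matrix.map_sub _ (map_sub π), Matrix.map_mul, hinv, one_mul, Matrix.map_aeval,
        Polynomial.map_mul, hmap0]
    · rw [Matrix.charpoly_map, hφ, Polynomial.map_mul, hmap0, hmap1]
  · exact ((hu ▸ (hcomm _).add_left (hcomm _)).units_inv_left).mul_left (hcomm _)

end IdempotentFromCoprimeFactors

section BlockDecomposition

theorem LinearMap.toMatrix_prodEquivOfIsCompl {R V : Type*} [CommRing R] [AddCommGroup V]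
    [Module R V] {p q : Submodule R V} {ι₀ ι₁ : Type*} [Fintype ι₀] [Fintype ι₁]
    [DecidableEq ι₀] [DecidableEq ι₁] (hpq : IsCompl p q) (b₀ : Module.Basis ι₀ R p)
    (b₁ : Module.Basis ι₁ R q) {g : Module.End R V} (hp : ∀ x ∈ p, g x ∈ p)
    (hq : ∀ x ∈ q, g x ∈ q) :
    LinearMap.toMatrix ((b₀.prod b₁).map (p.prodEquivOfIsCompl q hpq))
        ((b₀.prod b₁).map (p.prodEquivOfIsCompl q hpq)) g =
      Matrix.fromBlocks (LinearMap.toMatrix b₀ b₀ (g.restrict hp)) 0 0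
        (LinearMap.toMatrix b₁ b₁ (g.restrict hq)) := by
  rw [LinearMap.toMatrix_map_left, LinearMap.toMatrix_map_right, ← LinearMap.toMatrix_prodMap]
  congr 1
  ext x <;> simp [hp, hq]

theorem Submodule.finite_of_isCompl {R V : Type*} [Ring R] [AddCommGroup V] [Module R V]
    [Module.Finite R V] {p q : Submodule R V} (hpq : IsCompl p q) : Module.Finite R p :=
  .of_surjective _ (p.projectionOnto_surjective hpq)

variable {R : Type u} [CommRing R]

theorem IsProjectiveFree.free_of_isCompl (hR : IsProjectiveFree R) {V : Type u} [AddCommGroup V]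
    [Module R V] [Module.Finite R V] [Module.Projective R V] {p q : Submodule R V}
    (hpq : IsCompl p q) : Module.Free R p :=
  hR p (Submodule.finite_of_isCompl hpq) (.of_split p.subtype _ (p.projectionOnto_comp_subtype hpq))

theorem exists_algEquiv_fromBlocks_of_isIdempotentElem (hR : IsProjectiveFree R) {n : ℕ}
    {A E : Matrix (Fin n) (Fin n) R} (hE : IsIdempotentElem E) (hEA : Commute E A) :
    ∃ (ι₀ ι₁ : Type u) (_ : Fintype ι₀) (_ : Fintype ι₁) (_ : DecidableEq ι₀)
      (_ : DecidableEq ι₁) (Ψ : Matrix (Fin n) (Fin n) R ≃ₐ[R] Matrix (ι₀ ⊕ ι₁) (ι₀ ⊕ ι₁) R)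
      (M₀ : Matrix ι₀ ι₀ R) (M₁ : Matrix ι₁ ι₁ R), (∀ M, (Ψ M).charpoly = M.charpoly) ∧
      Ψ A = Matrix.fromBlocks M₀ 0 0 M₁ ∧ Ψ E = Matrix.fromBlocks 0 0 0 1 := by
  classical
  set e := Matrix.toLin' E
  have he : IsIdempotentElem e := hE.map Matrix.toLinAlgEquiv'
  have hpq := (LinearMap.IsIdempotentElem.isCompl he).symm
  obtain ⟨hrange, hker⟩ :=
    (LinearMap.IsIdempotentElem.commute_iff he).1 (hEA.map Matrix.toLinAlgEquiv')
  have := Submodule.finite_of_isCompl hpq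
  have := Submodule.finite_of_isCompl hpq.symm
  have := hR.free_of_isCompl hpq
  have := hR.free_of_isCompl hpq.symm
  set b₀ := Module.Free.chooseBasis R (LinearMap.ker e)
  set b₁ := Module.Free.chooseBasis R (LinearMap.range e)
  set B := (b₀.prod b₁).map ((LinearMap.ker e).prodEquivOfIsCompl _ hpq)
  have he₀ : ∀ x ∈ LinearMap.ker e, e x ∈ LinearMap.ker e := fun x hx => by
    simp [LinearMap.mem_ker.1 hx]
  have he₁ : ∀ x ∈ LinearMap.range e, e x ∈ LinearMap.range e :=
    fun x _ => LinearMap.mem_range_self e x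
  have hker₀ : e.restrict he₀ = 0 := by ext x; simp [LinearMap.mem_ker.1 x.2]
  have hrange₁ : e.restrict he₁ = LinearMap.id := by
    ext x; simp [(LinearMap.IsIdempotentElem.mem_range_iff he).1 x.2]
  refine ⟨_, _, inferInstance, inferInstance, inferInstance, inferInstance,
    Matrix.toLinAlgEquiv'.trans (LinearMap.toMatrixAlgEquiv B), _, _,
    fun M => (LinearMap.charpoly_toMatrix (Matrix.toLin' M) B).trans (Matrix.charpoly_toLin' M),
    LinearMap.toMatrix_prodEquivOfIsCompl hpq b₀ b₁
      (fun x hx => (Module.End.mem_invtSubmodule _).1 hker hx)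
      (fun x hx => (Module.End.mem_invtSubmodule _).1 hrange hx),
    (LinearMap.toMatrix_prodEquivOfIsCompl hpq b₀ b₁ he₀ he₁).trans ?_⟩
  rw [hker₀, hrange₁, map_zero, LinearMap.toMatrix_id]

theorem exists_charpoly_eq_mul_of_isStronglyJsharpClean (hR : IsProjectiveFree R) {n : ℕ}
    {A : Matrix (Fin n) (Fin n) R} (hA : IsStronglyJsharpClean A) :
    ∃ h₀ h₁ : R[X], A.charpoly = h₀ * h₁ ∧ h₀ ∈ Jpoly (0 : R) ∧ h₁ ∈ Jpoly (1 : R) := by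
  obtain ⟨E, hE, hAE, hEA⟩ := hA
  obtain ⟨ι₀, ι₁, _, _, _, _, Ψ, M₀, M₁, hΨ, hΨA, hΨE⟩ :=
    exists_algEquiv_fromBlocks_of_isIdempotentElem hR hE hEA
  have hblocks : M₀ ∈ Jsharp _ ∧ M₁ - 1 ∈ Jsharp _ := by
    apply fromBlocks_mem_jsharp
    have := map_mem_jsharp Ψ.toRingEquiv hAE
    rw [AlgEquiv.coe_ringEquiv, map_sub, hΨA, hΨE] at this
    simpa [sub_eq_add_neg, Matrix.fromBlocks_neg, Matrix.fromBlocks_add] using this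
  refine ⟨M₀.charpoly, M₁.charpoly, ?_, Matrix.charpoly_mem_jpoly (by simpa using hblocks.1),
    Matrix.charpoly_mem_jpoly (by simpa using hblocks.2)⟩
  rw [← hΨ, hΨA, Matrix.charpoly_fromBlocks_zero₁₂]

end BlockDecomposition

/-- for a monic `h` of degree `n` over a projective-free ring, TFAE:
every matrix with characteristic polynomial `h` is strongly `J^#`-clean; the companion
matrix of `h` is strongly `J^#`-clean; `h = h₀h₁` with `h₀ ∈ 𝕁₀`, `h₁ ∈ 𝕁₁`. -/
theorem stronglyJsharpClean_charpoly_tfae {R : Type u} [CommRing R]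
    (hR : IsProjectiveFree R) {n : ℕ} (h : R[X]) (hmonic : h.Monic)
    (hdeg : h.natDegree = n) :
    ((∀ φ : Matrix (Fin n) (Fin n) R, φ.charpoly = h → IsStronglyJsharpClean φ) ↔
      IsStronglyJsharpClean (companionMatrix n h)) ∧
    (IsStronglyJsharpClean (companionMatrix n h) ↔
      ∃ h₀ h₁ : R[X], h = h₀ * h₁ ∧ h₀ ∈ Jpoly (0 : R) ∧ h₁ ∈ Jpoly (1 : R)) := by
  subst hdeg
  have hC := charpoly_companionMatrix hmonic
  have h23 : IsStronglyJsharpClean (companionMatrix h.natDegree h) →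
      ∃ h₀ h₁ : R[X], h = h₀ * h₁ ∧ h₀ ∈ Jpoly (0 : R) ∧ h₁ ∈ Jpoly (1 : R) := fun hc =>
    hC ▸ exists_charpoly_eq_mul_of_isStronglyJsharpClean hR hc
  have h31 : (∃ h₀ h₁ : R[X], h = h₀ * h₁ ∧ h₀ ∈ Jpoly (0 : R) ∧ h₁ ∈ Jpoly (1 : R)) →
      ∀ φ : Matrix (Fin h.natDegree) (Fin h.natDegree) R, φ.charpoly = h →
        IsStronglyJsharpClean φ :=
    fun ⟨_, _, heq, h0, h1⟩ _ hφ => isStronglyJsharpClean_of_charpoly_eq_mul (hφ.trans heq) h0 h1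
  exact ⟨⟨fun H => H _ hC, fun hc => h31 (h23 hc)⟩, ⟨h23, fun H => h31 H _ hC⟩⟩
end

section
/- Let F be a field and let A be an n × n matrix over F. Then A is the sum of an idempotent matrix and a nilpotent matrix that commute if and only if the characteristic polynomial of A is χ(A) = t^s(t − 1)^r for some integers s, r ≥ 0 with s + r = n. -/
/-!
If `A = E + W` with `E` idempotent, `W` nilpotent and `E W = W E`, then `A² - A = W (2E + W - 1)`
is nilpotent. Conversely, if `A² - A` is nilpotent then `2A - 1` is a unit (its square is
`1 + 4 (A² - A)`), so Newton's method for `X² - X`, run in the commutative algebra generated by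
`A`, produces an idempotent `E` with `A - E` nilpotent. For a matrix over a field, nilpotency of
`A² - A` means, by Cayley–Hamilton in one direction and the spectral mapping theorem over an
algebraic closure in the other, that `χ(A)` is a product of factors `t` and `t - 1`.
-/

open Polynomial

universe u

section Ring

variable {S : Type*} [Ring S]

theorem isNilpotent_sq_sub_self_of_isIdempotentElem_add {e w : S}
    (he : IsIdempotentElem e) (hw : IsNilpotent w) (hew : Commute e w) :
    IsNilpotent ((e + w) ^ 2 - (e + w)) := by
  have hfactor : (e + w) ^ 2 - (e + w) = w * (e + e + w - 1) := by
    rw [sq, add_mul, mul_add, mul_add, he.eq, hew.eq]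
    noncomm_ring
  have hcomm : Commute w (e + e + w - 1) :=
    ((hew.symm.add_right hew.symm).add_right (.refl w)).sub_right (.one_right w)
  rw [hfactor]
  exact hcomm.isNilpotent_mul_right hw

theorem exists_isIdempotentElem_isNilpotent_sub {R : Type*} [CommRing R] {x : R}
    (hx : IsNilpotent (x ^ 2 - x)) : ∃ e, IsIdempotentElem e ∧ IsNilpotent (x - e) := by
  have hunit : IsUnit (aeval x (derivative (X ^ 2 - X : ℤ[X]))) := by
    have hsq : (2 * x - 1) ^ 2 = 1 + 4 * (x ^ 2 - x) := by ring
    have hunit_sq : IsUnit ((2 * x - 1) ^ 2) :=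
      hsq ▸ ((Commute.all 4 _).isNilpotent_mul_left hx).isUnit_one_add
    simpa [map_ofNat] using (isUnit_pow_iff two_ne_zero).1 hunit_sq
  obtain ⟨e, ⟨hxe, he⟩, -⟩ :=
    existsUnique_nilpotent_sub_and_aeval_eq_zero (by simpa using hx) hunit
  refine ⟨e, ?_, hxe⟩
  simpa [sq, sub_eq_zero, IsIdempotentElem] using he

theorem exists_isIdempotentElem_commute_isNilpotent_sub {a : S}
    (ha : IsNilpotent (a ^ 2 - a)) :
    ∃ e, IsIdempotentElem e ∧ Commute e a ∧ IsNilpotent (a - e) := by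
  let T := Algebra.adjoin ℤ {a}
  let x : T := ⟨a, Algebra.self_mem_adjoin_singleton ℤ a⟩
  have hx : IsNilpotent (x ^ 2 - x) :=
    (IsNilpotent.map_iff (f := T.val) Subtype.val_injective).1 ha
  obtain ⟨e, he, hxe⟩ := exists_isIdempotentElem_isNilpotent_sub hx
  exact ⟨e, he.map T.val, congrArg Subtype.val (mul_comm e x), hxe.map T.val⟩

theorem exists_isIdempotentElem_add_isNilpotent_iff (a : S) :
    (∃ e w, IsIdempotentElem e ∧ IsNilpotent w ∧ Commute e w ∧ a = e + w) ↔
      IsNilpotent (a ^ 2 - a) := by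
  constructor
  · rintro ⟨e, w, he, hw, hew, rfl⟩
    exact isNilpotent_sq_sub_self_of_isIdempotentElem_add he hw hew
  · intro ha
    obtain ⟨e, he, hea, hae⟩ := exists_isIdempotentElem_commute_isNilpotent_sub ha
    exact ⟨e, a - e, he, hae, hea.sub_right (.refl e), (add_sub_cancel e a).symm⟩

end Ring

theorem spectrum.eval_eq_zero_of_aeval_eq_zero {𝕜 A : Type*} [Field 𝕜] [Ring A] [Algebra 𝕜 A]
    {a : A} {p : 𝕜[X]} (hp : aeval a p = 0) {μ : 𝕜} (hμ : μ ∈ spectrum 𝕜 a) : p.eval μ = 0 := by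
  have hmem := spectrum.subset_polynomial_aeval a p ⟨μ, hμ, rfl⟩
  rw [hp, spectrum.mem_iff, sub_zero] at hmem
  by_contra hne
  exact hmem ((Ne.isUnit hne).map _)

theorem Multiset.prod_map_X_sub_C_of_forall_eq_zero_or_eq_one {R : Type*} [CommRing R]
    [Nontrivial R] [DecidableEq R] (t : Multiset R) (ht : ∀ x ∈ t, x = 0 ∨ x = 1) :
    (t.map (X - C ·)).prod = X ^ t.count 0 * (X - 1) ^ t.count 1 := by
  induction t using Multiset.induction_on with
  | empty => simp
  | cons a t ih =>
    rw [Multiset.map_cons, Multiset.prod_cons, ih fun x hx => ht x (Multiset.mem_cons_of_mem hx)]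
    rcases ht a (Multiset.mem_cons_self a t) with rfl | rfl
    · rw [Multiset.count_cons_self, Multiset.count_cons_of_ne one_ne_zero, C_0, sub_zero]
      ring
    · rw [Multiset.count_cons_self, Multiset.count_cons_of_ne zero_ne_one, C_1]
      ring

theorem Polynomial.eq_X_pow_mul_X_sub_one_pow {K : Type*} [Field K] [DecidableEq K] {p : K[X]}
    (hp : p.Monic) (hsplit : p.Splits) (hroots : ∀ μ ∈ p.roots, μ = 0 ∨ μ = 1) :
    p = X ^ p.roots.count 0 * (X - 1) ^ p.roots.count 1 := by
  rw [← Multiset.prod_map_X_sub_C_of_forall_eq_zero_or_eq_one _ hroots]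
  exact hsplit.eq_prod_roots_of_monic hp

theorem Polynomial.natDegree_X_pow_mul_X_sub_one_pow {R : Type*} [CommRing R] [Nontrivial R]
    (s r : ℕ) : (X ^ s * (X - 1) ^ r : R[X]).natDegree = s + r := by
  have hmonic : (X - 1 : R[X]).Monic := by simpa using monic_X_sub_C (1 : R)
  have hdeg : (X - 1 : R[X]).natDegree = 1 := by simpa using natDegree_X_sub_C (1 : R)
  rw [(monic_X_pow s).natDegree_mul (hmonic.pow r), natDegree_X_pow, hmonic.natDegree_pow, hdeg,
    mul_one]

namespace Matrix

variable {K ι : Type*} [Field K] [Fintype ι] [DecidableEq ι]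

theorem eq_zero_or_eq_one_of_isRoot_charpoly {A : Matrix ι ι K} (hA : IsNilpotent (A ^ 2 - A))
    {μ : K} (hμ : A.charpoly.IsRoot μ) : μ = 0 ∨ μ = 1 := by
  obtain ⟨m, hm⟩ := hA
  have hm' : aeval A ((X ^ 2 - X : K[X]) ^ m) = 0 := by simpa using hm
  have hμm := spectrum.eval_eq_zero_of_aeval_eq_zero hm' (mem_spectrum_iff_isRoot_charpoly.2 hμ)
  have hμ2 : μ * (μ - 1) = 0 := by
    linear_combination (by simpa using hμm : μ ^ 2 - μ = 0 ∧ m ≠ 0).1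
  simpa [sub_eq_zero] using mul_eq_zero.1 hμ2

theorem exists_charpoly_eq_X_pow_mul_X_sub_one_pow {A : Matrix ι ι K}
    (hA : IsNilpotent (A ^ 2 - A)) :
    ∃ s r, s + r = Fintype.card ι ∧ A.charpoly = X ^ s * (X - 1) ^ r := by
  classical
  let φ := algebraMap K (AlgebraicClosure K)
  have hB : IsNilpotent ((A.map φ) ^ 2 - A.map φ) := by
    simpa [Matrix.map_pow, Matrix.map_sub] using hA.map φ.mapMatrix
  have hBchar := eq_X_pow_mul_X_sub_one_pow (A.map φ).charpoly_monic (IsAlgClosed.splits _)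
    fun μ hμ => eq_zero_or_eq_one_of_isRoot_charpoly hB (isRoot_of_mem_roots hμ)
  set s := (A.map φ).charpoly.roots.count 0
  set r := (A.map φ).charpoly.roots.count 1
  have hAchar : A.charpoly = X ^ s * (X - 1) ^ r :=
    Polynomial.map_injective φ φ.injective (by rw [← charpoly_map, hBchar]; simp)
  refine ⟨s, r, ?_, hAchar⟩
  rw [← natDegree_X_pow_mul_X_sub_one_pow (R := K), ← hAchar, charpoly_natDegree_eq_dim]

theorem isNilpotent_sq_sub_self_of_charpoly_eq {R : Type*} [CommRing R] {A : Matrix ι ι R}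
    {s r : ℕ} (hA : A.charpoly = X ^ s * (X - 1) ^ r) : IsNilpotent (A ^ 2 - A) := by
  have hfactor : (X ^ 2 - X : R[X]) ^ (s + r) = A.charpoly * (X ^ r * (X - 1) ^ s) := by
    rw [hA, show (X ^ 2 - X : R[X]) = X * (X - 1) by ring, mul_pow, pow_add, pow_add]
    ring
  exact ⟨s + r, by simpa [aeval_self_charpoly] using congrArg (aeval A) hfactor⟩

theorem isNilpotent_sq_sub_self_iff (A : Matrix ι ι K) :
    IsNilpotent (A ^ 2 - A) ↔
      ∃ s r, s + r = Fintype.card ι ∧ A.charpoly = X ^ s * (X - 1) ^ r :=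
  ⟨exists_charpoly_eq_X_pow_mul_X_sub_one_pow, fun ⟨_, _, _, hA⟩ =>
    isNilpotent_sq_sub_self_of_charpoly_eq hA⟩

end Matrix

/-- a matrix over a field is the sum of an idempotent and a nilpotent
that commute iff its characteristic polynomial is `t ^ s * (t - 1) ^ r` with `s + r = n`. -/
theorem matrix_field_idempotent_add_nilpotent_iff {F : Type*} [Field F] {n : ℕ}
    (A : Matrix (Fin n) (Fin n) F) :
    (∃ E W : Matrix (Fin n) (Fin n) F,
        IsIdempotentElem E ∧ IsNilpotent W ∧ E * W = W * E ∧ A = E + W) ↔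
      ∃ s r : ℕ, s + r = n ∧ A.charpoly = X ^ s * (X - 1) ^ r := by
  refine (exists_isIdempotentElem_add_isNilpotent_iff A).trans ?_
  rw [Matrix.isNilpotent_sq_sub_self_iff, Fintype.card_fin]
end

section
/- Let A be an n × n matrix over the ring of integers ℤ. Then A is the sum of an idempotent matrix and a nilpotent matrix that commute if and only if the characteristic polynomial of A is χ(A) = t^s(t − 1)^r for some integers s, r ≥ 0 with s + r = n. -/
/-!
In any ring, `a = e + w` with `e` idempotent, `w` nilpotent and `e w = w e` iff `a (a - 1)` is
nilpotent. Indeed `(e + w)(e + w - 1) = w (2e + w - 1)`; conversely `a` is idempotent modulo the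
nilradical of the commutative ring `ℤ[a]`, and idempotents lift along nil ideals.

Over an algebraically closed field containing `ℤ`, nilpotency of `A (A - 1)` says exactly that
every eigenvalue of `A` is `0` or `1`, i.e. that `χ(A)` factors as `t ^ s (t - 1) ^ r`; the
converse is Cayley–Hamilton, which gives `A ^ s (A - 1) ^ r = 0`.
-/

open Polynomial

universe u

theorem isNilpotent_mul_of_pow_mul_pow_eq_zero {S : Type*} [Ring S] {a b : S} (hab : Commute a b)
    {s r : ℕ} (h : a ^ s * b ^ r = 0) : IsNilpotent (a * b) := by
  refine ⟨s + r, ?_⟩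
  calc (a * b) ^ (s + r) = a ^ r * (a ^ s * b ^ r) * b ^ s := by
        rw [hab.mul_pow, add_comm s r, pow_add, pow_add]; simp only [mul_assoc]
    _ = 0 := by rw [h, mul_zero, zero_mul]

theorem IsIdempotentElem.isNilpotent_add_mul_add_sub_one {S : Type*} [Ring S] {e w : S}
    (he : IsIdempotentElem e) (hw : IsNilpotent w) (hew : Commute e w) :
    IsNilpotent ((e + w) * (e + w - 1)) := by
  have hfactor : (e + w) * (e + w - 1) = w * (e + e + w - 1) := by
    calc (e + w) * (e + w - 1) = e * e - e + (e * w + w * e + w * w - w) := by noncomm_ring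
      _ = w * (e + e + w - 1) := by rw [he.eq, hew.eq]; noncomm_ring
  rw [hfactor]
  exact (((hew.symm.add_right hew.symm).add_right (Commute.refl w)).sub_right
    (Commute.one_right w)).isNilpotent_mul_right hw

theorem exists_isIdempotentElem_isNilpotent_sub_of_isNilpotent_mul_sub_one {T : Type*}
    [CommRing T] {x : T} (h : IsNilpotent (x * (x - 1))) :
    ∃ e, IsIdempotentElem e ∧ IsNilpotent (x - e) := by
  let f := Ideal.Quotient.mk (nilradical T)
  have hker : ∀ y ∈ RingHom.ker f, IsNilpotent y := fun y hy => by
    rwa [Ideal.mk_ker, mem_nilradical] at hy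
  have hfx : IsIdempotentElem (f x) := by
    rw [IsIdempotentElem, ← map_mul, ← sub_eq_zero, ← map_sub, Ideal.Quotient.eq_zero_iff_mem,
      mem_nilradical, ← mul_sub_one]
    exact h
  obtain ⟨e, he, hfe⟩ := exists_isIdempotentElem_eq_of_ker_isNilpotent f hker _ ⟨x, rfl⟩ hfx
  exact ⟨e, he, hker _ (by rw [RingHom.mem_ker, map_sub, hfe, sub_self])⟩

open scoped IsMulCommutative in
theorem exists_isIdempotentElem_commute_isNilpotent_sub_of_isNilpotent_mul_sub_one {S : Type*}
    [Ring S] {a : S} (h : IsNilpotent (a * (a - 1))) :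
    ∃ e, IsIdempotentElem e ∧ IsNilpotent (a - e) ∧ Commute e a := by
  let x : Algebra.adjoin ℤ {a} := ⟨a, Algebra.self_mem_adjoin_singleton ℤ a⟩
  have hx : IsNilpotent (x * (x - 1)) :=
    (IsNilpotent.map_iff (f := (Algebra.adjoin ℤ {a}).val) Subtype.val_injective).mp h
  obtain ⟨e, he, hxe⟩ := exists_isIdempotentElem_isNilpotent_sub_of_isNilpotent_mul_sub_one hx
  exact ⟨e, he.map (Algebra.adjoin ℤ {a}).val, hxe.map (Algebra.adjoin ℤ {a}).val,
    congrArg Subtype.val (mul_comm e x)⟩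

theorem isNilpotent_mul_sub_one_iff_exists_isIdempotentElem_add_isNilpotent {S : Type*} [Ring S]
    {a : S} :
    IsNilpotent (a * (a - 1)) ↔
      ∃ e w : S, IsIdempotentElem e ∧ IsNilpotent w ∧ e * w = w * e ∧ a = e + w := by
  constructor
  · intro h
    obtain ⟨e, he, hw, hea⟩ :=
      exists_isIdempotentElem_commute_isNilpotent_sub_of_isNilpotent_mul_sub_one h
    exact ⟨e, a - e, he, hw, (hea.sub_right (Commute.refl e)).eq, (add_sub_cancel e a).symm⟩
  · rintro ⟨e, w, he, hw, hew, rfl⟩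
    exact he.isNilpotent_add_mul_add_sub_one hw hew

theorem Polynomial.Splits.eq_X_pow_mul_X_sub_one_pow {R : Type*} [CommRing R] [IsDomain R]
    {p : R[X]} (hp : p.Splits) (hm : p.Monic) (hroots : ∀ z ∈ p.roots, z = 0 ∨ z = 1) :
    ∃ s r : ℕ, s + r = p.natDegree ∧ p = X ^ s * (X - 1) ^ r := by
  classical
  set zeros := p.roots.filter (· = 0)
  set ones := p.roots.filter (¬ · = 0)
  have hzeros : zeros = Multiset.replicate (Multiset.card zeros) 0 :=
    Multiset.eq_replicate_card.mpr fun z hz => (Multiset.mem_filter.mp hz).2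
  have hones : ones = Multiset.replicate (Multiset.card ones) 1 :=
    Multiset.eq_replicate_card.mpr fun z hz =>
      (hroots z (Multiset.mem_filter.mp hz).1).resolve_left (Multiset.mem_filter.mp hz).2
  have hsplit : zeros + ones = p.roots := Multiset.filter_add_not _ _
  refine ⟨Multiset.card zeros, Multiset.card ones, ?_, ?_⟩
  · rw [← Multiset.card_add, hsplit, hp.natDegree_eq_card_roots]
  · conv_lhs => rw [hp.eq_prod_roots_of_monic hm, ← hsplit, hzeros, hones]
    simp

theorem spectrum.eval_eq_zero_of_isNilpotent_aeval {𝕜 A : Type*} [Field 𝕜] [Ring A]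
    [Algebra 𝕜 A] {a : A} {p : 𝕜[X]} (hp : IsNilpotent (aeval a p)) {k : 𝕜}
    (hk : k ∈ spectrum 𝕜 a) : p.eval k = 0 := by
  obtain ⟨m, hm⟩ := hp
  have hmem := spectrum.subset_polynomial_aeval a (p ^ m) ⟨k, hk, rfl⟩
  rw [map_pow, hm] at hmem
  cases subsingleton_or_nontrivial A with
  | inl _ => simp [spectrum.of_subsingleton] at hk
  | inr _ =>
    simp only [spectrum.zero_eq, Set.mem_singleton_iff, eval_pow] at hmem
    exact IsNilpotent.eq_zero ⟨m, hmem⟩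

namespace Matrix

variable {n : Type*} [Fintype n] [DecidableEq n]

theorem charpoly_eq_X_pow_mul_X_sub_one_pow_of_isNilpotent {R : Type*} [CommRing R] [IsDomain R]
    {A : Matrix n n R} (h : IsNilpotent (A * (A - 1))) :
    ∃ s r : ℕ, s + r = Fintype.card n ∧ A.charpoly = X ^ s * (X - 1) ^ r := by
  let K := AlgebraicClosure (FractionRing R)
  let f : R →+* K := (algebraMap (FractionRing R) K).comp (algebraMap R (FractionRing R))
  have hf : Function.Injective f :=
    (algebraMap (FractionRing R) K).injective.comp (IsFractionRing.injective R _)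
  set B := A.map f
  have hB : IsNilpotent (aeval B (X * (X - 1) : K[X])) := by
    have hmap := h.map f.mapMatrix
    rw [map_mul, map_sub, map_one] at hmap
    simpa [B] using hmap
  have hroots : ∀ z ∈ B.charpoly.roots, z = 0 ∨ z = 1 := fun z hz => by
    have hz := spectrum.eval_eq_zero_of_isNilpotent_aeval hB
      (mem_spectrum_iff_isRoot_charpoly.mpr (isRoot_of_mem_roots hz))
    simpa [sub_eq_zero] using hz
  obtain ⟨s, r, hsr, hBchar⟩ :=
    (IsAlgClosed.splits B.charpoly).eq_X_pow_mul_X_sub_one_pow B.charpoly_monic hroots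
  refine ⟨s, r, hsr.trans B.charpoly_natDegree_eq_dim, Polynomial.map_injective f hf ?_⟩
  rw [← charpoly_map, hBchar]
  simp

theorem isNilpotent_mul_sub_one_iff_exists_charpoly_eq {R : Type*} [CommRing R] [IsDomain R]
    {A : Matrix n n R} :
    IsNilpotent (A * (A - 1)) ↔
      ∃ s r : ℕ, s + r = Fintype.card n ∧ A.charpoly = X ^ s * (X - 1) ^ r := by
  refine ⟨charpoly_eq_X_pow_mul_X_sub_one_pow_of_isNilpotent, ?_⟩
  rintro ⟨s, r, -, hchar⟩
  refine isNilpotent_mul_of_pow_mul_pow_eq_zero (s := s) (r := r)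
    ((Commute.refl A).sub_right (Commute.one_right A)) ?_
  simpa [hchar] using aeval_self_charpoly A

end Matrix

/-- an integer matrix is the sum of an idempotent and a nilpotent
that commute iff its characteristic polynomial is `t ^ s * (t - 1) ^ r` with `s + r = n`. -/
theorem matrix_int_idempotent_add_nilpotent_iff {n : ℕ}
    (A : Matrix (Fin n) (Fin n) ℤ) :
    (∃ E W : Matrix (Fin n) (Fin n) ℤ,
        IsIdempotentElem E ∧ IsNilpotent W ∧ E * W = W * E ∧ A = E + W) ↔
      ∃ s r : ℕ, s + r = n ∧ A.charpoly = X ^ s * (X - 1) ^ r := by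
  rw [← isNilpotent_mul_sub_one_iff_exists_isIdempotentElem_add_isNilpotent,
    Matrix.isNilpotent_mul_sub_one_iff_exists_charpoly_eq, Fintype.card_fin]
end

section
/- Let R be a projective-free ring and let φ be a 2 × 2 matrix over R. Then φ is strongly J^#-clean in M₂(R) if and only if one of the following holds: (1) χ(φ) ≡ t² modulo J(R); or (2) χ(φ) ≡ (t − 1)² modulo J(R); or (3) χ(φ) has a root in J(R) and a root in 1 + J(R). -/
open Polynomial

universe u

/-!
A projective-free ring has no idempotents but `0` and `1` (a free direct summand `εR` of `R`
is `0` or faithful), so by Cayley–Hamilton a `2 × 2` idempotent `e` is `0`, `1`, or has trace `1`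
and determinant `0`. Modulo the radical ideal `J(R)` the ring is reduced, membership in `J^#` of
the matrix ring becomes nilpotency, and over a reduced ring `φ - r` is nilpotent exactly when
`χ(φ) = (t - r)²`; this settles the idempotents `0` and `1`. For a trace-one idempotent `e`
commuting with `φ`, the decomposition `φ = φe + φ(1 - e)` gives
`χ(φ) = (t - tr (φe)) (t - tr (φ(1 - e)))`, and these roots lie in `1 + J(R)` and `J(R)` because
`(φ - e)e` and `(φ - e)(1 - e)` are nilpotent modulo `J(R)`. Conversely, roots `a ∈ J(R)` and
`b ∈ 1 + J(R)` make `b - a` a unit, and `(b - a)⁻¹ (φ - a)` is the required idempotent since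
`(φ - a)(φ - b) = 0`.
-/

open Matrix

theorem Polynomial.map_mk_eq_map_mk_iff {R : Type*} [CommRing R] {I : Ideal R} {p q : R[X]} :
    p.map (Ideal.Quotient.mk I) = q.map (Ideal.Quotient.mk I) ↔ ∀ i, (p - q).coeff i ∈ I := by
  rw [← sub_eq_zero, ← Polynomial.map_sub, Polynomial.ext_iff]
  simp only [Polynomial.coeff_map, Polynomial.coeff_zero, Ideal.Quotient.eq_zero_iff_mem]

theorem IsProjectiveFree.eq_zero_or_eq_one_of_isIdempotentElem {R : Type u} [CommRing R]
    (hR : IsProjectiveFree R) {ε : R} (hε : IsIdempotentElem ε) : ε = 0 ∨ ε = 1 := by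
  let M := R ∙ ε
  have hproj : Module.Projective R M := by
    refine Module.Projective.of_split M.subtype
      (LinearMap.toSpanSingleton R M ⟨ε, Submodule.mem_span_singleton_self ε⟩) ?_
    ext ⟨x, hx⟩
    obtain ⟨r, rfl⟩ := Submodule.mem_span_singleton.mp hx
    simp [mul_assoc, hε.eq]
  have : Module.Free R M := hR M (Module.Finite.span_singleton R ε) hproj
  let b := Module.Free.chooseBasis R M
  rcases isEmpty_or_nonempty (Module.Free.ChooseBasisIndex R M) with hι | ⟨⟨i⟩⟩
  · left
    have : Subsingleton M := b.repr.toEquiv.subsingleton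
    exact congrArg Subtype.val (Subsingleton.elim (⟨ε, Submodule.mem_span_singleton_self ε⟩ : M) 0)
  · right
    have hann : (1 - ε) • b i = 0 := by
      obtain ⟨r, hr⟩ := Submodule.mem_span_singleton.mp (b i).2
      ext
      simp only [SetLike.val_smul, ← hr, smul_eq_mul, Submodule.coe_zero]
      linear_combination -r * hε.eq
    have h1ε : 1 - ε = 0 := by simpa using congrArg (fun m => b.repr m i) hann
    exact (sub_eq_zero.mp h1ε).symm

theorem jacobsonRadical_eq_asIdeal (S : Type*) [Ring S] :
    jacobsonRadical S = TwoSidedIdeal.asIdeal (⊥ : TwoSidedIdeal S).jacobson := by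
  rw [TwoSidedIdeal.asIdeal_jacobson, jacobsonRadical]
  congr

instance {R : Type*} [CommRing R] : IsReduced (R ⧸ jacobsonRadical R) :=
  (Ideal.isRadical_iff_quotient_reduced _).mp (Ideal.isRadical_jacobson ⊥)

theorem isUnit_sub_of_mem_jacobsonRadical {R : Type*} [CommRing R] {a b : R}
    (ha : a ∈ jacobsonRadical R) (hb : b - 1 ∈ jacobsonRadical R) : IsUnit (b - a) := by
  have hba : b - a - 1 ∈ jacobsonRadical R := by simpa [sub_right_comm] using sub_mem hb ha
  exact Ideal.isUnit_of_sub_one_mem_jacobson_bot _ hba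

namespace Matrix

section Nilpotent

variable {n R : Type*} [Fintype n] [DecidableEq n] [CommRing R]

theorem charpoly_eq_X_pow_of_isNilpotent [IsReduced R] {M : Matrix n n R} (hM : IsNilpotent M) :
    M.charpoly = X ^ Fintype.card n := by
  rw [← sub_eq_zero]
  ext i
  exact IsReduced.eq_zero _ (Polynomial.isNilpotent_iff.mp
    (isNilpotent_charpoly_sub_pow_of_isNilpotent hM) i)

theorem isNilpotent_sub_scalar_iff [IsReduced R] {M : Matrix n n R} {r : R} :
    IsNilpotent (M - scalar n r) ↔ M.charpoly = (X - C r) ^ Fintype.card n := by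
  constructor
  · intro h
    have hshift := charpoly_eq_X_pow_of_isNilpotent h
    rw [charpoly_sub_scalar] at hshift
    calc M.charpoly = (M.charpoly.comp (X + C r)).comp (X - C r) := by simp [comp_assoc]
      _ = (X - C r) ^ Fintype.card n := by rw [hshift]; simp
  · intro h
    have hCH := aeval_self_charpoly M
    rw [h, map_pow, map_sub, aeval_X, aeval_C] at hCH
    exact ⟨Fintype.card n, hCH⟩

end Nilpotent

section JacobsonRadical

variable {n R : Type*} [Fintype n] [DecidableEq n]

theorem mem_jacobsonRadical_iff [Ring R] {M : Matrix n n R} :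
    M ∈ jacobsonRadical (Matrix n n R) ↔ ∀ i j, M i j ∈ jacobsonRadical R := by
  simp only [jacobsonRadical_eq_asIdeal, TwoSidedIdeal.mem_asIdeal,
    ← TwoSidedIdeal.matrix_jacobson_bot, TwoSidedIdeal.mem_matrix]

variable [CommRing R]

local notation "π" => Ideal.Quotient.mk (jacobsonRadical R)

theorem mem_Jsharp_iff {M : Matrix n n R} :
    M ∈ Jsharp (Matrix n n R) ↔ IsNilpotent (M.map π) := by
  have hpow : ∀ k, M ^ k ∈ jacobsonRadical _ ↔ M.map π ^ k = 0 := fun k => by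
    simp [mem_jacobsonRadical_iff, ← Matrix.map_pow, ← Matrix.ext_iff,
      Ideal.Quotient.eq_zero_iff_mem]
  constructor
  · rintro ⟨k, -, hk⟩
    exact ⟨k, (hpow k).1 hk⟩
  · rintro ⟨k, hk⟩
    exact ⟨k + 1, k.succ_pos, (hpow _).2 (by rw [pow_succ, hk, zero_mul])⟩

theorem sub_scalar_mem_Jsharp_iff {M : Matrix n n R} {r : R} :
    M - scalar n r ∈ Jsharp (Matrix n n R) ↔
      ∀ i, (M.charpoly - (X - C r) ^ Fintype.card n).coeff i ∈ jacobsonRadical R := by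
  rw [mem_Jsharp_iff, ← Polynomial.map_mk_eq_map_mk_iff, ← charpoly_map]
  have : (M - scalar n r).map π = M.map π - scalar n (π r) := by
    ext i j
    by_cases hij : i = j <;> simp [scalar_apply, diagonal, hij]
  rw [this, isNilpotent_sub_scalar_iff]
  simp

theorem trace_mul_mem_jacobsonRadical {N E : Matrix n n R} (hN : N ∈ Jsharp (Matrix n n R))
    (hNE : Commute N E) : (N * E).trace ∈ jacobsonRadical R := by
  rw [← Ideal.Quotient.eq_zero_iff_mem, AddMonoidHom.map_trace, Matrix.map_mul]
  refine IsReduced.eq_zero _ (isNilpotent_trace_of_isNilpotent ?_)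
  exact (hNE.map (RingHom.mapMatrix π)).isNilpotent_mul_right (mem_Jsharp_iff.mp hN)

theorem isStronglyJsharpClean_of_mul_eq_zero {M : Matrix n n R} {a b : R}
    (ha : a ∈ jacobsonRadical R) (hb : b - 1 ∈ jacobsonRadical R)
    (hM : (M - scalar n a) * (M - scalar n b) = 0) : IsStronglyJsharpClean M := by
  have hπa : π a = 0 := Ideal.Quotient.eq_zero_iff_mem.mpr ha
  have hπb : π b = 1 := by
    rw [← sub_eq_zero, ← map_one π, ← map_sub]
    exact Ideal.Quotient.eq_zero_iff_mem.mpr hb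
  obtain ⟨v, hv⟩ := isUnit_sub_of_mem_jacobsonRadical ha hb
  set P := M - scalar n a with hP
  have hPP : P * P = (b - a) • P := by
    calc P * P = P * (M - scalar n b) + P * scalar n (b - a) := by
          rw [← mul_add, map_sub, hP]; congr 1; abel
      _ = (b - a) • P := by
          rw [hM, zero_add, scalar_apply, ← smul_one_eq_diagonal, mul_smul_comm, mul_one]
  have hπv : π ↑v⁻¹ = 1 := by
    have h := congrArg π v.inv_mul
    rwa [map_mul, hv, map_sub, hπa, hπb, sub_zero, mul_one, map_one] at h
  refine ⟨(↑v⁻¹ : R) • P, ?_, ?_, ?_⟩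
  · rw [IsIdempotentElem, smul_mul_smul_comm, hPP, smul_smul, ← hv,
      Units.inv_mul_cancel_right]
  · have hmap : (M - (↑v⁻¹ : R) • P).map π = 0 := by
      ext i j
      by_cases hij : i = j <;> simp [hP, hπv, hπa, scalar_apply, diagonal, hij]
    rw [mem_Jsharp_iff, hmap]
    exact IsNilpotent.zero
  · exact (((Commute.refl M).sub_left (scalar_commute a (Commute.all a) M)).smul_left _).eq

end JacobsonRadical

section FinTwo

variable {R : Type*} [CommRing R]

theorem sq_fin_two (A : Matrix (Fin 2) (Fin 2) R) : A ^ 2 = A.trace • A - A.det • 1 := by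
  ext i j
  fin_cases i <;> fin_cases j <;>
    simp [sq, mul_apply, Fin.sum_univ_two, trace_fin_two, det_fin_two] <;> ring

theorem det_add_fin_two (A B : Matrix (Fin 2) (Fin 2) R) :
    (A + B).det = A.det + B.det + A.trace * B.trace - (A * B).trace := by
  simp [det_fin_two, trace_fin_two, mul_apply, Fin.sum_univ_two]
  ring

theorem _root_.IsIdempotentElem.det_eq_zero_of_trace_eq_one {e : Matrix (Fin 2) (Fin 2) R}
    (he : IsIdempotentElem e) (htr : e.trace = 1) : e.det = 0 := by
  have h := sq_fin_two e
  rw [sq, he.eq, htr, one_smul, eq_comm, sub_eq_self] at h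
  simpa using congrFun (congrFun h 0) 0

theorem _root_.IsIdempotentElem.eq_zero_or_eq_one_or_trace_eq_one
    (hR : ∀ ε : R, IsIdempotentElem ε → ε = 0 ∨ ε = 1) {e : Matrix (Fin 2) (Fin 2) R}
    (he : IsIdempotentElem e) : e = 0 ∨ e = 1 ∨ e.trace = 1 := by
  have hdet : IsIdempotentElem e.det := by rw [IsIdempotentElem, ← det_mul, he.eq]
  rcases hR _ hdet with hdet0 | hdet1
  · have hscal : e = e.trace • e := by
      have h := sq_fin_two e
      rwa [sq, he.eq, hdet0, zero_smul, sub_zero] at h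
    have htr : IsIdempotentElem e.trace := by
      simpa [IsIdempotentElem, trace_smul, eq_comm] using congrArg trace hscal
    rcases hR _ htr with htr0 | htr1
    · left
      rw [hscal, htr0, zero_smul]
    · exact Or.inr (Or.inr htr1)
  · right; left
    have hu : IsUnit e := (isUnit_iff_isUnit_det e).mpr (hdet1 ▸ isUnit_one)
    exact hu.mul_left_cancel (he.eq.trans (mul_one e).symm)

theorem charpoly_eq_of_commute_of_trace_eq_one {φ e : Matrix (Fin 2) (Fin 2) R}
    (he : IsIdempotentElem e) (htr : e.trace = 1) (hφe : Commute φ e) :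
    φ.charpoly = (X - C (φ * e).trace) * (X - C (φ * (1 - e)).trace) := by
  nontriviality R
  have hf : IsIdempotentElem (1 - e) := he.one_sub
  have hftr : (1 - e).trace = 1 := by
    rw [trace_sub, trace_one, htr]; norm_num
  have hsplit : φ = φ * e + φ * (1 - e) := by noncomm_ring
  have hprod : φ * e * (φ * (1 - e)) = 0 := by
    calc φ * e * (φ * (1 - e)) = φ * (e * φ) * (1 - e) := by simp only [mul_assoc]
      _ = φ * φ * (e * (1 - e)) := by rw [← hφe.eq]; simp only [mul_assoc]
      _ = 0 := by rw [he.mul_one_sub_self, mul_zero]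
  have htrace : φ.trace = (φ * e).trace + (φ * (1 - e)).trace := by
    rw [← trace_add, ← hsplit]
  have hdet : φ.det = (φ * e).trace * (φ * (1 - e)).trace := by
    conv_lhs => rw [hsplit]
    rw [det_add_fin_two, hprod, det_mul, det_mul, he.det_eq_zero_of_trace_eq_one htr,
      hf.det_eq_zero_of_trace_eq_one hftr]
    simp
  rw [charpoly_fin_two, htrace, hdet, C_add, C_mul]
  ring

theorem charpoly_eq_of_eval_eq_zero {φ : Matrix (Fin 2) (Fin 2) R} {a b : R} (hab : IsUnit (b - a))
    (ha : φ.charpoly.eval a = 0) (hb : φ.charpoly.eval b = 0) :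
    φ.charpoly = (X - C a) * (X - C b) := by
  nontriviality R
  rw [charpoly_fin_two] at ha hb ⊢
  simp only [eval_add, eval_sub, eval_pow, eval_X, eval_mul, eval_C] at ha hb
  have htr : φ.trace = a + b := by
    have h : (b - a) * (a + b - φ.trace) = 0 := by linear_combination hb - ha
    linear_combination -(hab.mul_right_eq_zero.mp h)
  have hdet : φ.det = a * b := by linear_combination ha + a * htr
  rw [htr, hdet, C_add, C_mul]
  ring

theorem exists_roots_of_commute_of_trace_eq_one {φ e : Matrix (Fin 2) (Fin 2) R}
    (he : IsIdempotentElem e) (htr : e.trace = 1) (hφe : Commute φ e)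
    (hN : φ - e ∈ Jsharp (Matrix (Fin 2) (Fin 2) R)) :
    ∃ a b : R, a ∈ jacobsonRadical R ∧ b - 1 ∈ jacobsonRadical R ∧
      φ.charpoly.eval a = 0 ∧ φ.charpoly.eval b = 0 := by
  have hNe : Commute (φ - e) e := hφe.sub_left (Commute.refl e)
  refine ⟨(φ * (1 - e)).trace, (φ * e).trace, ?_, ?_, ?_, ?_⟩
  · have h : (φ - e) * (1 - e) = φ * (1 - e) := by rw [sub_mul, he.mul_one_sub_self, sub_zero]
    rw [← h]
    exact trace_mul_mem_jacobsonRadical hN ((Commute.one_right _).sub_right hNe)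
  · have h : (φ * e).trace - 1 = ((φ - e) * e).trace := by rw [sub_mul, he.eq, trace_sub, htr]
    rw [h]
    exact trace_mul_mem_jacobsonRadical hN hNe
  all_goals simp [charpoly_eq_of_commute_of_trace_eq_one he htr hφe]

end FinTwo

end Matrix

/-- a `2 × 2` matrix `φ` over a projective-free ring is strongly
`J^#`-clean iff `χ(φ) ≡ t² (mod J(R))`, or `χ(φ) ≡ (t-1)² (mod J(R))`, or `χ(φ)`
has a root in `J(R)` and a root in `1 + J(R)`. -/
theorem stronglyJsharpClean_two_iff {R : Type u} [CommRing R] (hR : IsProjectiveFree R)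
    (φ : Matrix (Fin 2) (Fin 2) R) :
    IsStronglyJsharpClean φ ↔
      (∀ i, (φ.charpoly - X ^ 2).coeff i ∈ jacobsonRadical R) ∨
      (∀ i, (φ.charpoly - (X - 1) ^ 2).coeff i ∈ jacobsonRadical R) ∨
      (∃ a b : R, a ∈ jacobsonRadical R ∧ b - 1 ∈ jacobsonRadical R ∧
        φ.charpoly.eval a = 0 ∧ φ.charpoly.eval b = 0) := by
  have hX : (X : R[X]) ^ 2 = (X - C 0) ^ Fintype.card (Fin 2) := by simp
  have hX1 : ((X : R[X]) - 1) ^ 2 = (X - C 1) ^ Fintype.card (Fin 2) := by simp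
  rw [hX, hX1, ← sub_scalar_mem_Jsharp_iff, ← sub_scalar_mem_Jsharp_iff, map_zero, sub_zero,
    map_one]
  constructor
  · rintro ⟨e, he, hN, heφ⟩
    rcases he.eq_zero_or_eq_one_or_trace_eq_one (fun _ => hR.eq_zero_or_eq_one_of_isIdempotentElem)
      with rfl | rfl | htr
    · exact Or.inl (by simpa using hN)
    · exact Or.inr (Or.inl hN)
    · exact Or.inr (Or.inr (exists_roots_of_commute_of_trace_eq_one he htr heφ.symm hN))
  · rintro (hN | hN | ⟨a, b, ha, hb, hra, hrb⟩)
    · exact ⟨0, .zero, by simpa using hN, by simp⟩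
    · exact ⟨1, .one, hN, by simp⟩
    · refine isStronglyJsharpClean_of_mul_eq_zero ha hb ?_
      have hCH := aeval_self_charpoly φ
      rwa [charpoly_eq_of_eval_eq_zero (isUnit_sub_of_mem_jacobsonRadical ha hb) hra hrb, map_mul,
        map_sub, map_sub, aeval_X, aeval_C, aeval_C] at hCH
end

section
/- Let R be a projective-free ring. Then the power series ring R[[x]] is projective-free; that is, every finitely generated projective R[[x]]-module is free. -/
/-!
`X` lies in the Jacobson radical of `R⟦X⟧` and `R⟦X⟧ ⧸ (X) ≅ R`, so for a finitely generated
projective `R⟦X⟧`-module `M` the base change `R ⊗ M` is free over `R`. Lifting an `R`-basis to `M`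
gives a map `R⟦X⟧ⁿ → M` that is surjective by Nakayama's lemma. It splits because `M` is
projective, so its kernel `K` is a finitely generated direct summand; as the basis stays linearly
independent modulo `X`, `K = X • K`, and Nakayama's lemma again gives `K = 0`.
-/

open Polynomial

universe u

open TensorProduct

theorem LinearMap.ker_tensorProductMk_of_surjective {A B M : Type*} [CommRing A] [CommRing B]
    [Algebra A B] [AddCommGroup M] [Module A M] (hsurj : Function.Surjective (algebraMap A B)) :
    ker (TensorProduct.mk A B M 1) = RingHom.ker (algebraMap A B) • ⊤ := by
  let e : (A ⧸ RingHom.ker (algebraMap A B)) ≃ₐ[A] B :=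
    Ideal.quotientKerAlgEquivOfSurjective (f := Algebra.ofId A B) hsurj
  have hmk : TensorProduct.mk A B M 1 = (e.toLinearEquiv.rTensor M).toLinearMap ∘ₗ
      TensorProduct.mk A (A ⧸ RingHom.ker (algebraMap A B)) M 1 := by
    ext m
    exact congrArg (· ⊗ₜ[A] m) (map_one e).symm
  rw [hmk, LinearEquiv.ker_comp, LinearMap.ker_tensorProductMk]

theorem LinearMap.ker_eq_bot_of_ker_le_smul_top {A F M : Type*} [CommRing A] [AddCommGroup F]
    [Module A F] [AddCommGroup M] [Module A M] [Module.Finite A F] [Module.Projective A M]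
    {I : Ideal A} (hI : I ≤ Ideal.jacobson ⊥) {φ : F →ₗ[A] M} (hφ : Function.Surjective φ)
    (hker : ker φ ≤ I • ⊤) : ker φ = ⊥ := by
  have : Module.Finite A M := .of_surjective φ hφ
  have : Module.FinitePresentation A M := Module.finitePresentation_of_projective A M
  obtain ⟨s, hs⟩ := Module.projective_lifting_property φ LinearMap.id hφ
  -- `ker φ` is the image of the projection `id - s ∘ φ`, which carries `I • ⊤` into `I • ker φ`.
  let π : F →ₗ[A] F := LinearMap.id - s ∘ₗ φ
  have hπ : ∀ k ∈ ker φ, π k = k := fun k hk => by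
    simp [π, LinearMap.mem_ker.mp hk]
  have hrange : range π ≤ ker φ := by
    rintro _ ⟨x, rfl⟩
    simp [π, ← LinearMap.comp_apply φ s, hs]
  refine Submodule.eq_bot_of_le_smul_of_le_jacobson_bot I _
    (Module.FinitePresentation.fg_ker φ hφ) (fun k hk => ?_) hI
  rw [← hπ k hk]
  have : π k ∈ (I • ⊤ : Submodule A F).map π := ⟨k, hker hk, rfl⟩
  rw [Submodule.map_smul'', Submodule.map_top] at this
  exact Submodule.smul_mono le_rfl hrange this

theorem Submodule.mem_ideal_smul_top_pi {A ι : Type*} [CommRing A] [Fintype ι] {I : Ideal A}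
    {v : ι → A} (hv : ∀ i, v i ∈ I) : v ∈ I • (⊤ : Submodule A (ι → A)) := by
  classical
  rw [pi_eq_sum_univ v]
  exact Submodule.sum_mem _ fun i _ => Submodule.smul_mem_smul (hv i) trivial

theorem Module.free_of_free_baseChange {A B M : Type*} [CommRing A] [CommRing B] [Algebra A B]
    [AddCommGroup M] [Module A M] [Module.Finite A M] [Module.Projective A M]
    [Module.Free B (B ⊗[A] M)] (hsurj : Function.Surjective (algebraMap A B))
    (hjac : RingHom.ker (algebraMap A B) ≤ Ideal.jacobson ⊥) : Module.Free A M := by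
  let b := Module.Free.chooseBasis B (B ⊗[A] M)
  choose m hm using fun i => TensorProduct.mk_surjective A M B hsurj (b i)
  let φ := Fintype.linearCombination A m
  have hφ : ∀ v, (1 : B) ⊗ₜ[A] φ v = ∑ i, algebraMap A B (v i) • b i := fun v => by
    simp [φ, Fintype.linearCombination_apply, TensorProduct.tmul_sum, ← hm, algebraMap_smul]
  have hφ_surj : Function.Surjective φ := by
    refine LinearMap.surjective_of_surjective_comp_mkQ φ _ hjac ?_
    rintro ⟨y⟩
    choose v hv using fun i => hsurj (b.repr (1 ⊗ₜ y) i)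
    refine ⟨v, (Submodule.Quotient.eq _).mpr ?_⟩
    rw [← LinearMap.ker_tensorProductMk_of_surjective hsurj, LinearMap.mem_ker, map_sub]
    simp [hφ, hv, b.sum_repr]
  have hφ_ker : LinearMap.ker φ ≤ RingHom.ker (algebraMap A B) • ⊤ := fun k hk =>
    Submodule.mem_ideal_smul_top_pi fun i => RingHom.mem_ker.mpr <|
      Fintype.linearIndependent_iff.mp b.linearIndependent _
        (by rw [← hφ, LinearMap.mem_ker.mp hk, TensorProduct.tmul_zero]) i
  exact Module.Free.of_equiv (LinearEquiv.ofBijective φ ⟨LinearMap.ker_eq_bot.mp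
    (LinearMap.ker_eq_bot_of_ker_le_smul_top hjac hφ_surj hφ_ker), hφ_surj⟩)

theorem PowerSeries.ker_constantCoeff_le_jacobson (R : Type*) [CommRing R] :
    RingHom.ker (constantCoeff (R := R)) ≤ Ideal.jacobson ⊥ := fun f hf =>
  Ideal.mem_jacobson_bot.mpr fun g => PowerSeries.isUnit_iff_constantCoeff.mpr <| by
    simp [RingHom.mem_ker.mp hf]

/-- if `R` is projective-free then so is the power series ring `R[[x]]`. -/
theorem isProjectiveFree_powerSeries {R : Type u} [CommRing R]
    (hR : IsProjectiveFree R) : IsProjectiveFree (PowerSeries R) := by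
  intro M _ _ _ _
  let _ : Algebra (PowerSeries R) R := (PowerSeries.constantCoeff (R := R)).toAlgebra
  have : Module.Free R (R ⊗[PowerSeries R] M) := hR _ inferInstance inferInstance
  exact Module.free_of_free_baseChange
    (fun r => ⟨PowerSeries.C r, PowerSeries.constantCoeff_C r⟩)
    (PowerSeries.ker_constantCoeff_le_jacobson R)
end

section
/- Let f : R → S be a surjective ring homomorphism with ker(f) ⊆ J(R). If a ∈ R is strongly J^#-clean, then f(a) ∈ S is strongly J^#-clean. -/
open Polynomial

universe u

lemma map_mem_jacobsonRadical {R S : Type*} [Ring R] [Ring S] (f : R →+* S)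
    (hsurj : Function.Surjective f) {x : R} (hx : x ∈ jacobsonRadical R) :
    f x ∈ jacobsonRadical S := by
  rw [jacobsonRadical, Ideal.mem_jacobson_iff] at hx ⊢
  intro s
  obtain ⟨y, rfl⟩ := hsurj s
  obtain ⟨z, hz⟩ := hx y
  rw [Ideal.mem_bot] at hz
  refine ⟨f z, ?_⟩
  rw [Ideal.mem_bot]
  have := congrArg f hz
  simpa using this

/-- strongly `J^#`-clean elements are preserved by surjective ring
homomorphisms whose kernel is contained in the Jacobson radical. -/
theorem isStronglyJsharpClean_map {R S : Type*} [Ring R] [Ring S] (f : R →+* S)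
    (hsurj : Function.Surjective f) (hker : RingHom.ker f ≤ jacobsonRadical R)
    (a : R) (ha : IsStronglyJsharpClean a) :
    IsStronglyJsharpClean (f a) := by
  obtain ⟨e, he, ⟨n, hn, hJ⟩, hcomm⟩ := ha
  refine ⟨f e, ?_, ⟨n, hn, ?_⟩, ?_⟩
  · show f e * f e = f e
    rw [← map_mul, he]
  · have : (f a - f e) ^ n = f ((a - e) ^ n) := by rw [map_pow, map_sub]
    rw [this]
    exact map_mem_jacobsonRadical f hsurj hJ
  · rw [← map_mul, ← map_mul, hcomm]
end

section
/- Let R be a commutative ring and let φ ∈ M_n(R) with φ ∈ J^#(M_n(R)) (i.e., φ^m ∈ M_n(J(R)) for some m ∈ ℕ). Then every coefficient of χ(φ) − t^n lies in J(R); in particular, tr(φ) ∈ J(R) and det(φ) ∈ J(R). -/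
/-! Since `J(R)` is a radical ideal, `R ⧸ J(R)` is reduced. Modulo `J(R)` the matrix `φ` is
nilpotent, so `χ(φ) - t ^ n` has nilpotent, hence zero, coefficients there. -/

open Polynomial

universe u

theorem TwoSidedIdeal.asIdeal_jacobson_bot {R : Type*} [Ring R] :
    asIdeal (⊥ : TwoSidedIdeal R).jacobson = (⊥ : Ideal R).jacobson := by
  rw [asIdeal_jacobson]
  congr 1

theorem Matrix.mem_jacobson_bot_iff {R n : Type*} [Ring R] [Fintype n] [DecidableEq n]
    {M : Matrix n n R} :
    M ∈ (⊥ : Ideal (Matrix n n R)).jacobson ↔ ∀ i j, M i j ∈ (⊥ : Ideal R).jacobson := by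
  simp only [← TwoSidedIdeal.asIdeal_jacobson_bot, TwoSidedIdeal.mem_asIdeal,
    ← TwoSidedIdeal.matrix_jacobson_bot, TwoSidedIdeal.mem_matrix]

theorem Ideal.IsRadical.mem_of_isNilpotent_mk {R : Type*} [CommRing R] {I : Ideal R}
    (hI : I.IsRadical) {x : R} (hx : IsNilpotent (Ideal.Quotient.mk I x)) : x ∈ I := by
  obtain ⟨k, hk⟩ := hx
  rw [← map_pow, Ideal.Quotient.eq_zero_iff_mem] at hk
  exact hI ⟨k, hk⟩

theorem Matrix.isNilpotent_map_mk_of_pow_mem {R n : Type*} [CommRing R] [Fintype n]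
    [DecidableEq n] {I : Ideal R} {M : Matrix n n R} {m : ℕ} (hm : ∀ i j, (M ^ m) i j ∈ I) :
    IsNilpotent (M.map (Ideal.Quotient.mk I)) := by
  refine ⟨m, ?_⟩
  rw [← RingHom.mapMatrix_apply, ← map_pow]
  ext i j
  exact Ideal.Quotient.eq_zero_iff_mem.mpr (hm i j)

section Radical

variable {R n : Type*} [CommRing R] [Fintype n] [DecidableEq n] {I : Ideal R}
  {M : Matrix n n R}

theorem Matrix.charpoly_sub_X_pow_coeff_mem_of_isNilpotent_map (hI : I.IsRadical)
    (hM : IsNilpotent (M.map (Ideal.Quotient.mk I))) (i : ℕ) :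
    (M.charpoly - X ^ Fintype.card n).coeff i ∈ I := by
  have h := Matrix.isNilpotent_charpoly_sub_pow_of_isNilpotent hM
  rw [Matrix.charpoly_map, ← Polynomial.map_X (Ideal.Quotient.mk I), ← Polynomial.map_pow,
    ← Polynomial.map_sub] at h
  exact hI.mem_of_isNilpotent_mk (by simpa using Polynomial.isNilpotent_iff.mp h i)

theorem Matrix.trace_mem_of_isNilpotent_map (hI : I.IsRadical)
    (hM : IsNilpotent (M.map (Ideal.Quotient.mk I))) : M.trace ∈ I := by
  have h := Matrix.isNilpotent_trace_of_isNilpotent hM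
  rw [← AddMonoidHom.map_trace] at h
  exact hI.mem_of_isNilpotent_mk h

theorem Matrix.det_mem_of_isNilpotent_map [Nonempty n] (hI : I.IsRadical)
    (hM : IsNilpotent (M.map (Ideal.Quotient.mk I))) : M.det ∈ I := by
  have h := Matrix.charpoly_sub_X_pow_coeff_mem_of_isNilpotent_map hI hM 0
  rw [Polynomial.coeff_sub, Polynomial.coeff_X_pow, if_neg Fintype.card_ne_zero.symm,
    sub_zero] at h
  rw [Matrix.det_eq_sign_charpoly_coeff]
  exact I.mul_mem_left _ h

end Radical

/-- if `φ ∈ J^#(M_n(R))` over a commutative ring, then all coefficients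
of `χ(φ) - t ^ n` lie in `J(R)`; in particular `tr(φ) ∈ J(R)` and `det(φ) ∈ J(R)`. -/
theorem charpoly_coeff_mem_of_mem_Jsharp {R : Type*} [CommRing R] {n : ℕ} (hn : 0 < n)
    (φ : Matrix (Fin n) (Fin n) R) (hφ : φ ∈ Jsharp (Matrix (Fin n) (Fin n) R)) :
    (∀ i, (φ.charpoly - X ^ n).coeff i ∈ jacobsonRadical R) ∧
      φ.trace ∈ jacobsonRadical R ∧ φ.det ∈ jacobsonRadical R := by
  obtain ⟨m, -, hm⟩ := hφ
  have hJ : (jacobsonRadical R).IsRadical := Ideal.isRadical_jacobson ⊥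
  have hnil : IsNilpotent (φ.map (Ideal.Quotient.mk (jacobsonRadical R))) :=
    Matrix.isNilpotent_map_mk_of_pow_mem (Matrix.mem_jacobson_bot_iff.mp hm)
  have : Nonempty (Fin n) := ⟨⟨0, hn⟩⟩
  refine ⟨fun i => ?_, Matrix.trace_mem_of_isNilpotent_map hJ hnil,
    Matrix.det_mem_of_isNilpotent_map hJ hnil⟩
  simpa using Matrix.charpoly_sub_X_pow_coeff_mem_of_isNilpotent_map hJ hnil i
end

section
/- Let R be a projective-free ring and let φ be a 2 × 2 matrix over R such that neither φ nor I₂ − φ lies in J^#(M₂(R)), and suppose the characteristic polynomial χ(φ) has a root in J(R) and a root in 1 + J(R). Then φ is strongly J^#-clean in M₂(R). -/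
open Polynomial

universe u

/-- Characteristic polynomial of a `2 × 2` matrix. -/
lemma charpoly_fin_two' {R : Type u} [CommRing R] (φ : Matrix (Fin 2) (Fin 2) R) :
    φ.charpoly = X ^ 2 - C (φ 0 0 + φ 1 1) * X + C (φ 0 0 * φ 1 1 - φ 0 1 * φ 1 0) := by
  rw [Matrix.charpoly, Matrix.det_fin_two, Matrix.charmatrix_apply_eq,
    Matrix.charmatrix_apply_eq, Matrix.charmatrix_apply_ne _ _ _ (by decide),
    Matrix.charmatrix_apply_ne _ _ _ (by decide)]
  simp only [map_add, map_mul, map_sub]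
  ring

/-- A `2 × 2` matrix all of whose entries lie in `J(R)` lies in `J(M₂(R))`. -/
lemma mem_jacobson_matrix {R : Type u} [CommRing R] (M : Matrix (Fin 2) (Fin 2) R)
    (hM : ∀ i j, M i j ∈ jacobsonRadical R) :
    M ∈ jacobsonRadical (Matrix (Fin 2) (Fin 2) R) := by
  unfold jacobsonRadical Ideal.jacobson
  rw [Submodule.mem_sInf]
  rintro m ⟨-, hmax⟩
  by_contra hMm
  have hlt : m < m ⊔ Ideal.span {M} := by
    refine lt_of_le_of_ne le_sup_left fun h => hMm ?_
    have : M ∈ m ⊔ Ideal.span {M} :=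
      Submodule.mem_sup_right (Ideal.subset_span (Set.mem_singleton M))
    rwa [← h] at this
  have htop : m ⊔ Ideal.span {M} = ⊤ := hmax.out.2 _ hlt
  have h1 : (1 : Matrix (Fin 2) (Fin 2) R) ∈ m ⊔ Ideal.span {M} := htop ▸ Submodule.mem_top
  obtain ⟨y, hy, z, hz, hyz⟩ := Submodule.mem_sup.mp h1
  obtain ⟨r, hr⟩ := Ideal.mem_span_singleton'.mp hz
  have hx : ∀ i j, (r * M) i j ∈ jacobsonRadical R := fun i j => by
    rw [Matrix.mul_apply]
    exact Ideal.sum_mem _ fun k _ => Ideal.mul_mem_left _ _ (hM k j)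
  -- y = 1 - r * M is a unit
  have hy' : y = 1 - r * M := by rw [← hyz, hr]; abel
  have hdet : (1 - r * M).det - 1 ∈ jacobsonRadical R := by
    have : (1 - r * M).det - 1 =
        -((r*M) 0 0) - (r*M) 1 1 + (r*M) 0 0 * (r*M) 1 1 - (r*M) 0 1 * (r*M) 1 0 := by
      simp [Matrix.det_fin_two, Matrix.sub_apply, Matrix.one_apply]
      ring
    rw [this]
    exact Ideal.sub_mem _ (Ideal.add_mem _
      (Ideal.sub_mem _ (neg_mem (hx 0 0)) (hx 1 1))
      (Ideal.mul_mem_right _ _ (hx 0 0))) (Ideal.mul_mem_right _ _ (hx 0 1))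
  have hu : IsUnit (1 - r * M) := by
    rw [Matrix.isUnit_iff_isUnit_det]
    exact Ideal.isUnit_of_sub_one_mem_jacobson_bot _ hdet
  rw [← hy'] at hu
  exact hmax.out.1 (Ideal.eq_top_of_isUnit_mem m hy hu)

/-- a `2 × 2` matrix `φ` over a projective-free ring with
`φ, I₂ - φ ∉ J^#(M₂(R))` whose characteristic polynomial has a root in `J(R)` and a
root in `1 + J(R)` is strongly `J^#`-clean. -/
theorem stronglyJsharpClean_of_roots {R : Type u} [CommRing R] (hR : IsProjectiveFree R)
    (φ : Matrix (Fin 2) (Fin 2) R)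
    (h1 : φ ∉ Jsharp (Matrix (Fin 2) (Fin 2) R))
    (h2 : 1 - φ ∉ Jsharp (Matrix (Fin 2) (Fin 2) R))
    (h3 : ∃ a ∈ jacobsonRadical R, φ.charpoly.eval a = 0)
    (h4 : ∃ b : R, b - 1 ∈ jacobsonRadical R ∧ φ.charpoly.eval b = 0) :
    IsStronglyJsharpClean φ := by
  obtain ⟨a, ha, hae⟩ := h3
  obtain ⟨b, hb, hbe⟩ := h4
  set tr : R := φ 0 0 + φ 1 1 with htr
  set d : R := φ 0 0 * φ 1 1 - φ 0 1 * φ 1 0 with hd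
  rw [charpoly_fin_two' φ] at hae hbe
  simp only [eval_add, eval_sub, eval_mul, eval_pow, eval_X, eval_C] at hae hbe
  rw [← htr, ← hd] at hae hbe
  -- b - a is a unit
  have hba : b - a - 1 ∈ jacobsonRadical R := by
    have h := Ideal.sub_mem _ hb ha
    have e : b - a - 1 = b - 1 - a := by ring
    rwa [e]
  have hu : IsUnit (b - a) := Ideal.isUnit_of_sub_one_mem_jacobson_bot _ hba
  obtain ⟨v, hv⟩ := hu.exists_right_inv
  -- identify trace and determinant
  have htrab : tr = a + b := by
    have h5 : (b - a) * (a + b - tr) = 0 := by linear_combination hbe - hae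
    have h6 := hu.mul_right_eq_zero.mp h5
    linear_combination -h6
  have hdab : d = a * b := by linear_combination a * htrab + hae
  -- Cayley–Hamilton
  set A : R →+* Matrix (Fin 2) (Fin 2) R :=
    (algebraMap R (Matrix (Fin 2) (Fin 2) R)) with hA
  have hCH := Matrix.aeval_self_charpoly φ
  rw [charpoly_fin_two' φ] at hCH
  rw [← htr, ← hd] at hCH
  simp only [map_sub, map_add, map_mul, map_pow, aeval_X, aeval_C] at hCH
  rw [← hA] at hCH
  -- hCH : φ ^ 2 - A tr * φ + A d = 0
  have key : (φ - A a) * (φ - A b) = 0 := by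
    have comm : φ * A b = A b * φ := (Algebra.commutes b φ).symm
    have expand : (φ - A a) * (φ - A b)
        = φ ^ 2 - (A a + A b) * φ + A a * A b - (φ * A b - A b * φ) := by noncomm_ring
    rw [expand, comm, sub_self, sub_zero, ← map_add, ← map_mul, ← htrab, ← hdab]
    exact hCH
  have cv : Commute (A v) (φ - A a) := Algebra.commutes v (φ - A a)
  have sq : (φ - A a) * (φ - A a) = A (b - a) * (φ - A a) := by
    have h7 : (φ - A a) * (φ - A a)
        = (φ - A a) * (φ - A b) + (φ - A a) * A (b - a) := by
      rw [map_sub]; noncomm_ring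
    rw [h7, key, zero_add, ← (Algebra.commutes (b - a) (φ - A a))]
  refine ⟨A v * (φ - A a), ?_, ?_, ?_⟩
  · -- idempotent
    show A v * (φ - A a) * (A v * (φ - A a)) = A v * (φ - A a)
    rw [cv.symm.mul_mul_mul_comm, sq, ← mul_assoc, ← map_mul, ← map_mul]
    congr 1
    congr 1
    calc v * v * (b - a) = v * ((b - a) * v) := by ring
      _ = v := by rw [hv, mul_one]
  · -- φ - e ∈ J^#
    refine ⟨1, one_pos, ?_⟩
    rw [pow_one]
    have hrep : φ - A v * (φ - A a)
        = (1 - v) • φ + (v * a) • (1 : Matrix (Fin 2) (Fin 2) R) := by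
      rw [Algebra.smul_def, Algebra.smul_def, map_sub, map_one, map_mul, mul_one]
      noncomm_ring
    rw [hrep]
    have h1v : (1 : R) - v ∈ jacobsonRadical R := by
      have e : (1 : R) - v = v * (b - a - 1) := by linear_combination -hv
      rw [e]; exact Ideal.mul_mem_left _ _ hba
    have hva : v * a ∈ jacobsonRadical R := Ideal.mul_mem_left _ _ ha
    refine mem_jacobson_matrix _ fun i j => ?_
    rw [Matrix.add_apply, Matrix.smul_apply, Matrix.smul_apply, smul_eq_mul, smul_eq_mul]
    exact Ideal.add_mem _ (Ideal.mul_mem_right _ _ h1v) (Ideal.mul_mem_right _ _ hva)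
  · -- commutes with φ
    have c1 : Commute φ (A v * (φ - A a)) :=
      Commute.mul_right ((Algebra.commutes v φ).symm)
        ((Commute.refl φ).sub_right ((Algebra.commutes a φ).symm))
    exact c1.symm.eq
end
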